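/- arXiv:2504.00523 — 9 statements merged into one kernel-verified Lean document; each statement's English description precedes it below -/
import Mathlib

section
/- Let D=(V,E) be a DAG with V={1,...,d}, let c_{ik}>0 for i∈V and k∈pa(i), c_{ii}>0, and let Z_1,...,Z_d be independent atom-free random variables supported on [0,∞). Then the max-linear structural equation system X_i = max( max_{k∈pa(i)} c_{ik} X_k , c_{ii} Z_i ) has the unique solution X_i = max_{j∈An(i)} a_{ij} Z_j, where a_{ij} = max over paths p from j to i of the path weight d(p) = c_{jj} c_{k1 j} ... c_{i k_{ℓ-1}}, a_{ii}=c_{ii}, and a_{ij}=0 for j∉An(i). -/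
open scoped BigOperators

/-- A path in the directed graph with edge relation `E` (E k i meaning edge
k → i) from `j` to `i`, represented by the list of its nodes. -/
def IsPathList {d : ℕ} (E : Fin d → Fin d → Prop) (j i : Fin d)
    (l : List (Fin d)) : Prop :=
  l.head? = some j ∧ l.getLast? = some i ∧ l.Chain' E

/-- The weight d(p) = c_{jj}·c_{ℓ₁ℓ₀}···c_{ℓ_mℓ_{m-1}} of a path
p : j = ℓ₀ → ℓ₁ → ⋯ → ℓ_m = i (the weight of the edge k → i is c i k). -/
noncomputable def pathWeight {d : ℕ} (c : Fin d → Fin d → ℝ) :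
    List (Fin d) → ℝ
  | [] => 1
  | x :: xs => c x x * (((x :: xs).zip xs).map fun p => c p.2 p.1).prod

/-- The max-linear coefficient a_{ij}: the supremum of path weights over all
paths j ⇝ i (including the trivial path [j] of weight c_{jj} when j = i);
it equals 0 (= sSup ∅ in ℝ) when j ∉ An(i). -/
noncomputable def mlCoeff {d : ℕ} (E : Fin d → Fin d → Prop)
    (c : Fin d → Fin d → ℝ) (i j : Fin d) : ℝ :=
  sSup {w | ∃ l, IsPathList E j i l ∧ pathWeight c l = w}

/-- The max-linear function X = A ×_max z, X_i = max_{j} a_{ij} z_j. -/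
noncomputable def mlSol {d : ℕ} (E : Fin d → Fin d → Prop)
    (c : Fin d → Fin d → ℝ) (z : Fin d → ℝ) (i : Fin d) : ℝ :=
  ⨆ j, mlCoeff E c i j * z j

/-!
Split a path `j ⇝ i` at its last edge `k → i`: the path weights then satisfy
`a_{ij} = max(δ_{ij} c_{ii}, max_{k ∈ pa(i)} a_{kj} c_{ik})`, the maxima being attained because
acyclicity bounds the length of a path by `d`. Substituting this recursion into
`X_i = max_j a_{ij} z_j` shows that `X` solves the structural equations. Uniqueness is
well-founded induction along the DAG, since the `i`-th equation only involves the parents of `i`.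
-/

open Relation

section WellFounded

variable {α β : Type*} {r : α → α → Prop}

theorem wellFounded_of_not_transGen_self [Finite α] (h : ∀ a, ¬ TransGen r a a) :
    WellFounded r :=
  haveI : Std.Irrefl (TransGen r) := ⟨h⟩
  Subrelation.wf TransGen.single (Finite.wellFounded_of_trans_of_irrefl _)

theorem WellFounded.eq_of_isFixedPt (hr : WellFounded r) {F : (α → β) → α → β}
    (hF : ∀ x y a, (∀ b, r b a → x b = y b) → F x a = F y a) {x y : α → β}
    (hx : Function.IsFixedPt F x) (hy : Function.IsFixedPt F y) : x = y := by
  funext a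
  induction a using hr.induction with
  | _ a ih => rw [← hx, ← hy]; exact hF x y a ih

end WellFounded

theorem List.zip_cons_append_singleton {α : Type*} (x a : α) (xs : List α) :
    (x :: (xs ++ [a])).zip (xs ++ [a]) =
      (x :: xs).zip xs ++ [((x :: xs).getLast (List.cons_ne_nil x xs), a)] := by
  induction xs generalizing x with
  | nil => rfl
  | cons y ys ih => simp [ih]

section Paths

variable {d : ℕ} {E : Fin d → Fin d → Prop} {c : Fin d → Fin d → ℝ}
  {i j : Fin d} {l : List (Fin d)}

theorem IsPathList.reflTransGen (h : IsPathList E j i l) : ReflTransGen E j i := by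
  obtain ⟨hhead, hlast, hchain⟩ := h
  have hne : l ≠ [] := by rintro rfl; simp at hhead
  rw [List.head?_eq_some_head hne, Option.some_inj] at hhead
  rw [List.getLast?_eq_some_getLast hne, Option.some_inj] at hlast
  exact hhead ▸ hlast ▸ List.relationReflTransGen_of_exists_isChain l hchain hne

theorem IsPathList.nodup (hacyc : ∀ i, ¬ TransGen E i i) (h : IsPathList E j i l) :
    l.Nodup := by
  refine (List.isChain_iff_pairwise.mp (h.2.2.imp fun _ _ => TransGen.single)).imp ?_
  rintro a _ hab rfl
  exact hacyc a hab

theorem pathWeight_append_singleton {k : Fin d} (hk : l.getLast? = some k) (i : Fin d) :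
    pathWeight c (l ++ [i]) = pathWeight c l * c i k := by
  obtain ⟨x, xs, rfl⟩ := List.exists_cons_of_ne_nil (l := l) (by rintro rfl; simp at hk)
  rw [List.getLast?_eq_some_getLast (by simp), Option.some_inj] at hk
  simp [pathWeight, List.zip_cons_append_singleton, hk, mul_assoc]

theorem isPathList_iff :
    IsPathList E j i l ↔
      (l = [i] ∧ j = i) ∨ ∃ k l', E k i ∧ IsPathList E j k l' ∧ l = l' ++ [i] := by
  constructor
  · rintro ⟨hhead, hlast, hchain⟩
    rcases List.eq_nil_or_concat l with rfl | ⟨l', a, rfl⟩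
    · simp at hhead
    rw [List.concat_eq_append] at hhead hlast hchain ⊢
    obtain rfl : a = i := by simpa using hlast
    rcases eq_or_ne l' [] with rfl | hne
    · exact Or.inl ⟨rfl, by simpa using hhead.symm⟩
    · obtain ⟨hchain', -, hlink⟩ := List.isChain_append.mp hchain
      have hk := List.getLast?_eq_some_getLast hne
      refine Or.inr ⟨_, l', hlink _ hk _ rfl, ⟨?_, hk, hchain'⟩, rfl⟩
      rwa [List.head?_append_of_ne_nil _ hne] at hhead
  · rintro (⟨rfl, rfl⟩ | ⟨k, l', hki, ⟨hhead, hlast, hchain⟩, rfl⟩)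
    · exact ⟨rfl, rfl, List.isChain_singleton _⟩
    · have hne : l' ≠ [] := by rintro rfl; simp at hhead
      exact ⟨by rwa [List.head?_append_of_ne_nil _ hne], by simp,
        hchain.append (List.isChain_singleton _) (by simp_all)⟩

variable (E c) in
def pathWeights (j i : Fin d) : Set ℝ :=
  {w | ∃ l, IsPathList E j i l ∧ pathWeight c l = w}

theorem mem_pathWeights_iff {w : ℝ} :
    w ∈ pathWeights E c j i ↔
      (j = i ∧ w = c i i) ∨ ∃ k, E k i ∧ ∃ w' ∈ pathWeights E c j k, w = w' * c i k := by
  constructor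
  · rintro ⟨l, hl, rfl⟩
    rcases isPathList_iff.mp hl with ⟨rfl, rfl⟩ | ⟨k, l', hki, hl', rfl⟩
    · exact Or.inl ⟨rfl, by simp [pathWeight]⟩
    · exact Or.inr ⟨k, hki, _, ⟨l', hl', rfl⟩, pathWeight_append_singleton hl'.2.1 i⟩
  · rintro (⟨rfl, rfl⟩ | ⟨k, hki, _, ⟨l', hl', rfl⟩, rfl⟩)
    · exact ⟨[j], isPathList_iff.mpr (Or.inl ⟨rfl, rfl⟩), by simp [pathWeight]⟩
    · exact ⟨l' ++ [i], isPathList_iff.mpr (Or.inr ⟨k, l', hki, hl', rfl⟩),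
        pathWeight_append_singleton hl'.2.1 i⟩

theorem pathWeights_finite (hacyc : ∀ i, ¬ TransGen E i i) :
    (pathWeights E c j i).Finite :=
  ((List.finite_length_le (Fin d) d).image (pathWeight c)).subset <| by
    rintro w ⟨l, hl, rfl⟩
    exact ⟨l, by simpa using (hl.nodup hacyc).length_le_card, rfl⟩

end Paths

section Coefficients

variable {d : ℕ} {E : Fin d → Fin d → Prop} {c : Fin d → Fin d → ℝ} {i j k : Fin d}

theorem mlCoeff_self (hacyc : ∀ i, ¬ TransGen E i i) (i : Fin d) : mlCoeff E c i i = c i i := by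
  suffices pathWeights E c i i = {c i i} from (congrArg sSup this).trans (csSup_singleton _)
  ext w
  refine mem_pathWeights_iff.trans ⟨?_, fun hw => Or.inl ⟨rfl, hw⟩⟩
  rintro (⟨-, hw⟩ | ⟨k, hki, -, ⟨l, hl, -⟩, -⟩)
  · exact hw
  · exact absurd (TransGen.tail' hl.reflTransGen hki) (hacyc i)

theorem mlCoeff_eq_zero_of_pathWeights_eq_empty (h : pathWeights E c j i = ∅) :
    mlCoeff E c i j = 0 :=
  (congrArg sSup h).trans Real.sSup_empty

theorem mlCoeff_eq_zero_of_not_reflTransGen (h : ¬ ReflTransGen E j i) : mlCoeff E c i j = 0 :=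
  mlCoeff_eq_zero_of_pathWeights_eq_empty <|
    Set.eq_empty_of_forall_notMem fun _ ⟨_, hl, _⟩ => h hl.reflTransGen

theorem nonneg_of_mem_pathWeights (hacyc : ∀ i, ¬ TransGen E i i)
    (hdiag : ∀ i, 0 < c i i) (hedge : ∀ i k, E k i → 0 < c i k) :
    ∀ w ∈ pathWeights E c j i, 0 ≤ w := by
  induction i using (wellFounded_of_not_transGen_self hacyc).induction with
  | _ i ih =>
    rintro w hw
    rcases mem_pathWeights_iff.mp hw with ⟨-, rfl⟩ | ⟨k, hki, w', hw', rfl⟩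
    · exact (hdiag i).le
    · exact mul_nonneg (ih k hki w' hw') (hedge i k hki).le

theorem mlCoeff_nonneg (hacyc : ∀ i, ¬ TransGen E i i)
    (hdiag : ∀ i, 0 < c i i) (hedge : ∀ i k, E k i → 0 < c i k) : 0 ≤ mlCoeff E c i j :=
  Real.sSup_nonneg (nonneg_of_mem_pathWeights hacyc hdiag hedge)

theorem le_mlCoeff (hacyc : ∀ i, ¬ TransGen E i i) {w : ℝ} (hw : w ∈ pathWeights E c j i) :
    w ≤ mlCoeff E c i j :=
  le_csSup (pathWeights_finite hacyc).bddAbove hw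

theorem mlCoeff_mem_pathWeights (hacyc : ∀ i, ¬ TransGen E i i)
    (hne : (pathWeights E c j i).Nonempty) : mlCoeff E c i j ∈ pathWeights E c j i :=
  hne.csSup_mem (pathWeights_finite hacyc)

theorem mlCoeff_mul_le (hacyc : ∀ i, ¬ TransGen E i i)
    (hdiag : ∀ i, 0 < c i i) (hedge : ∀ i k, E k i → 0 < c i k) (hki : E k i) :
    mlCoeff E c k j * c i k ≤ mlCoeff E c i j := by
  rcases (pathWeights E c j k).eq_empty_or_nonempty with hemp | hne
  · rw [mlCoeff_eq_zero_of_pathWeights_eq_empty hemp, zero_mul]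
    exact mlCoeff_nonneg hacyc hdiag hedge
  · exact le_mlCoeff hacyc <| mem_pathWeights_iff.mpr <|
      Or.inr ⟨k, hki, _, mlCoeff_mem_pathWeights hacyc hne, rfl⟩

theorem mlCoeff_eq_zero_or_eq_diag_or_le_parent (hacyc : ∀ i, ¬ TransGen E i i)
    (hedge : ∀ i k, E k i → 0 < c i k) :
    mlCoeff E c i j = 0 ∨ (j = i ∧ mlCoeff E c i j = c i i) ∨
      ∃ k, E k i ∧ mlCoeff E c i j ≤ mlCoeff E c k j * c i k := by
  rcases (pathWeights E c j i).eq_empty_or_nonempty with hemp | hne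
  · exact Or.inl (mlCoeff_eq_zero_of_pathWeights_eq_empty hemp)
  rcases mem_pathWeights_iff.mp (mlCoeff_mem_pathWeights hacyc hne) with
    hdiag | ⟨k, hki, w', hw', heq⟩
  · exact Or.inr (Or.inl hdiag)
  · refine Or.inr (Or.inr ⟨k, hki, heq ▸ ?_⟩)
    exact mul_le_mul_of_nonneg_right (le_mlCoeff hacyc hw') (hedge i k hki).le

end Coefficients

section StructuralEquations

variable {d : ℕ} {E : Fin d → Fin d → Prop} {c : Fin d → Fin d → ℝ} {z x : Fin d → ℝ}
  {i k : Fin d}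

variable (E c) in
noncomputable def semMap (z x : Fin d → ℝ) (i : Fin d) : ℝ :=
  (⨆ k, ⨆ (_ : E k i), c i k * x k) ⊔ c i i * z i

theorem semMap_congr {y : Fin d → ℝ} (h : ∀ k, E k i → x k = y k) :
    semMap E c z x i = semMap E c z y i := by
  unfold semMap
  congr 2
  ext k
  exact iSup_congr fun hki => by rw [h k hki]

theorem le_semMap_of_edge (hki : E k i) : c i k * x k ≤ semMap E c z x i :=
  le_sup_of_le_left <| le_ciSup_of_le (Set.finite_range _).bddAbove k <|
    le_ciSup (f := fun _ : E k i => c i k * x k) (Set.finite_range _).bddAbove hki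

theorem semMap_le {b : ℝ} (hb : 0 ≤ b) (hpar : ∀ k, E k i → c i k * x k ≤ b)
    (hdiag : c i i * z i ≤ b) : semMap E c z x i ≤ b :=
  sup_le (Real.iSup_le (fun k => Real.iSup_le (hpar k) hb) hb) hdiag

theorem le_mlSol (z : Fin d → ℝ) (i j : Fin d) : mlCoeff E c i j * z j ≤ mlSol E c z i :=
  le_ciSup (f := fun j => mlCoeff E c i j * z j) (Set.finite_range _).bddAbove j

variable (hacyc : ∀ i, ¬ TransGen E i i) (hdiag : ∀ i, 0 < c i i)
  (hedge : ∀ i k, E k i → 0 < c i k) (hz : ∀ j, 0 ≤ z j)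
include hacyc hdiag hz

theorem mlSol_nonneg (i : Fin d) : 0 ≤ mlSol E c z i :=
  (mul_nonneg (hdiag i).le (hz i)).trans <| by
    simpa only [mlCoeff_self hacyc] using le_mlSol (E := E) (c := c) z i i

include hedge

theorem mlSol_le_semMap (i : Fin d) : mlSol E c z i ≤ semMap E c z (mlSol E c z) i := by
  have : Nonempty (Fin d) := ⟨i⟩
  refine ciSup_le fun j => ?_
  rcases mlCoeff_eq_zero_or_eq_diag_or_le_parent hacyc hedge (c := c) (i := i) (j := j) with
    h0 | ⟨rfl, hdiag'⟩ | ⟨k, hki, hle⟩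
  · rw [h0, zero_mul]
    exact (mul_nonneg (hdiag i).le (hz i)).trans le_sup_right
  · rw [hdiag']
    exact le_sup_right
  · calc mlCoeff E c i j * z j ≤ mlCoeff E c k j * c i k * z j :=
          mul_le_mul_of_nonneg_right hle (hz j)
      _ = c i k * (mlCoeff E c k j * z j) := by ring
      _ ≤ c i k * mlSol E c z k := mul_le_mul_of_nonneg_left (le_mlSol z k j) (hedge i k hki).le
      _ ≤ _ := le_semMap_of_edge hki

theorem semMap_mlSol_le (i : Fin d) : semMap E c z (mlSol E c z) i ≤ mlSol E c z i := by
  have : Nonempty (Fin d) := ⟨i⟩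
  refine semMap_le (mlSol_nonneg hacyc hdiag hz i) (fun k hki => ?_) ?_
  · rw [mlSol, Real.mul_iSup_of_nonneg (hedge i k hki).le]
    refine ciSup_le fun j => ?_
    calc c i k * (mlCoeff E c k j * z j) = mlCoeff E c k j * c i k * z j := by ring
      _ ≤ mlCoeff E c i j * z j :=
          mul_le_mul_of_nonneg_right (mlCoeff_mul_le hacyc hdiag hedge hki) (hz j)
      _ ≤ mlSol E c z i := le_mlSol z i j
  · simpa only [mlCoeff_self hacyc] using le_mlSol (E := E) (c := c) z i i

theorem isFixedPt_mlSol : Function.IsFixedPt (semMap E c z) (mlSol E c z) :=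
  funext fun i => (semMap_mlSol_le hacyc hdiag hedge hz i).antisymm
    (mlSol_le_semMap hacyc hdiag hedge hz i)

theorem eq_mlSol_of_isFixedPt (hx : Function.IsFixedPt (semMap E c z) x) : x = mlSol E c z :=
  (wellFounded_of_not_transGen_self hacyc).eq_of_isFixedPt (fun _ _ _ => semMap_congr) hx
    (isFixedPt_mlSol hacyc hdiag hedge hz)

end StructuralEquations

theorem maxlinear_sem_unique_solution_general {d : ℕ}
    (E : Fin d → Fin d → Prop) (c : Fin d → Fin d → ℝ)
    (hacyc : ∀ i, ¬ Relation.TransGen E i i)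
    (hdiagpos : ∀ i, 0 < c i i)
    (hedgepos : ∀ i k, E k i → 0 < c i k)
    (Ω : Type)
    (Z : Fin d → Ω → ℝ)
    (hZnn : ∀ i ω, 0 ≤ Z i ω) :
    (∀ i, mlCoeff E c i i = c i i)
    ∧ (∀ i j, ¬ Relation.ReflTransGen E j i → mlCoeff E c i j = 0)
    ∧ ∀ ω : Ω,
        (∀ i, mlSol E c (fun j => Z j ω) i
            = (⨆ k, ⨆ (_ : E k i), c i k * mlSol E c (fun j => Z j ω) k)
              ⊔ c i i * Z i ω)
        ∧ ∀ x : Fin d → ℝ,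
            (∀ i, x i = (⨆ k, ⨆ (_ : E k i), c i k * x k) ⊔ c i i * Z i ω) →
            x = mlSol E c (fun j => Z j ω) := by
  refine ⟨mlCoeff_self hacyc, fun _ _ => mlCoeff_eq_zero_of_not_reflTransGen, fun ω => ?_⟩
  have hz : ∀ j, 0 ≤ Z j ω := fun j => hZnn j ω
  exact ⟨fun i => (congrFun (isFixedPt_mlSol hacyc hdiagpos hedgepos hz) i).symm,
    fun x hx => eq_mlSol_of_isFixedPt hacyc hdiagpos hedgepos hz (funext fun i => (hx i).symm)⟩

/-- Let D = (V,E) be a DAG on V = {1,…,d}, with positive weights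
c_{ik} for k ∈ pa(i) and c_{ii} > 0, and let Z₁,…,Z_d be independent atom-free
random variables supported on [0,∞). Then the max-linear structural equation
system X_i = max(max_{k∈pa(i)} c_{ik}X_k, c_{ii}Z_i) has the unique solution
X_i = max_{j∈An(i)} a_{ij}Z_j, where a_{ij} is the maximal path weight over
paths j ⇝ i, a_{ii} = c_{ii}, and a_{ij} = 0 for j ∉ An(i). -/
theorem maxlinear_sem_unique_solution {d : ℕ}
    (E : Fin d → Fin d → Prop) (c : Fin d → Fin d → ℝ)
    (hacyc : ∀ i, ¬ Relation.TransGen E i i)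
    (hdiagpos : ∀ i, 0 < c i i)
    (hedgepos : ∀ i k, E k i → 0 < c i k)
    (Ω : Type) [MeasurableSpace Ω] (μ : MeasureTheory.Measure Ω)
    [MeasureTheory.IsProbabilityMeasure μ]
    (Z : Fin d → Ω → ℝ) (hZmeas : ∀ i, Measurable (Z i))
    (hindep : ProbabilityTheory.iIndepFun Z μ)
    (hZnn : ∀ i ω, 0 ≤ Z i ω)
    (hatomfree : ∀ i x, μ {ω | Z i ω = x} = 0) :
    (∀ i, mlCoeff E c i i = c i i)
    ∧ (∀ i j, ¬ Relation.ReflTransGen E j i → mlCoeff E c i j = 0)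
    ∧ ∀ ω : Ω,
        (∀ i, mlSol E c (fun j => Z j ω) i
            = (⨆ k, ⨆ (_ : E k i), c i k * mlSol E c (fun j => Z j ω) k)
              ⊔ c i i * Z i ω)
        ∧ ∀ x : Fin d → ℝ,
            (∀ i, x i = (⨆ k, ⨆ (_ : E k i), c i k * x k) ⊔ c i i * Z i ω) →
            x = mlSol E c (fun j => Z j ω) :=
  maxlinear_sem_unique_solution_general E c hacyc hdiagpos hedgepos Ω Z hZnn
end

section
/- In the three-node DAG with edges 2→1, 3→2, 3→1 and edge weights c_{12}, c_{23}, c_{13}>0, the max-linear coefficient a_{13} equals c_{12}c_{23} ∨ c_{13}; hence if c_{13} ≤ c_{12}c_{23}, then a_{13}=c_{12}c_{23} and the distribution of the solution X is unchanged if c_{13} is replaced by any value in [0, c_{12}c_{23}]. -/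
/-- In the three-node DAG with edges 2→1, 3→2, 3→1 and positive
edge weights c₁₂, c₂₃, c₁₃, the solution X₃ = z₃, X₂ = z₂ ∨ c₂₃z₃,
X₁ = z₁ ∨ c₁₂X₂ ∨ c₁₃X₃ satisfies X₁ = z₁ ∨ c₁₂z₂ ∨ (c₁₂c₂₃ ∨ c₁₃)z₃, so the
max-linear coefficient a₁₃ equals c₁₂c₂₃ ∨ c₁₃. Hence, if c₁₃ ≤ c₁₂c₂₃, then
replacing c₁₃ by any value in [0, c₁₂c₂₃] leaves the solution (hence the
distribution of X) unchanged. -/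
theorem three_node_identifiability (c12 c23 c13 : ℝ)
    (h12 : 0 < c12) (h23 : 0 < c23) (h13 : 0 < c13)
    (z1 z2 z3 : ℝ) (hz1 : 0 ≤ z1) (hz2 : 0 ≤ z2) (hz3 : 0 ≤ z3) :
    (z1 ⊔ c12 * (z2 ⊔ c23 * z3) ⊔ c13 * z3
      = z1 ⊔ c12 * z2 ⊔ (c12 * c23 ⊔ c13) * z3)
    ∧ (c13 ≤ c12 * c23 →
        ∀ c' ∈ Set.Icc (0 : ℝ) (c12 * c23),
          z1 ⊔ c12 * (z2 ⊔ c23 * z3) ⊔ c' * z3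
            = z1 ⊔ c12 * (z2 ⊔ c23 * z3) ⊔ c13 * z3) := by
  constructor
  · rw [mul_max_of_nonneg _ _ h12.le, max_mul_of_nonneg _ _ hz3]
    rw [← mul_assoc, sup_assoc, sup_assoc, sup_assoc]
  · intro h c' ⟨hc0, hc1⟩
    have key : ∀ a, 0 ≤ a → a ≤ c12 * c23 →
        z1 ⊔ c12 * (z2 ⊔ c23 * z3) ⊔ a * z3 = z1 ⊔ c12 * (z2 ⊔ c23 * z3) := by
      intro a ha hab
      apply max_eq_left
      calc a * z3 ≤ c12 * c23 * z3 := by nlinarith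
        _ = c12 * (c23 * z3) := by ring
        _ ≤ c12 * (z2 ⊔ c23 * z3) := by
            exact mul_le_mul_of_nonneg_left (le_max_right _ _) h12.le
        _ ≤ z1 ⊔ c12 * (z2 ⊔ c23 * z3) := le_max_right _ _
    rw [key c' hc0 hc1, key c13 h13.le h]
end

section
/- Let Ā be the row-standardized max-linear coefficient matrix of a recursive max-linear model (each row has Euclidean norm 1, with ā_{ii}>0 and ā_{ij}=a_{ij} rescaled by the row norm). Then for all i≠j, ā_{jj} > ā_{ij}. -/
open scoped BigOperators

/-- Let A be the max-linear coefficient matrix of a recursive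
max-linear model on a DAG with edge relation E (acyclic): A is nonnegative,
has positive diagonal, a_{ij} ≠ 0 only for j ∈ An(i), and satisfies the
max-weighted path inequality a_{iℓ} ≥ a_{ij}a_{jℓ}/a_{jj} for j ∈ An(i),
ℓ ∈ An(j). Let Ā be the row-standardized version, ā_{ij} = a_{ij}/‖a_{i·}‖
(so each row of Ā has Euclidean norm 1). Then for all i ≠ j: ā_{jj} > ā_{ij}. -/
theorem standardized_column_diagonal_dominance {d : ℕ}
    (E : Fin d → Fin d → Prop) (A : Fin d → Fin d → ℝ)
    (hacyc : ∀ i, ¬ Relation.TransGen E i i)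
    (hnn : ∀ i j, 0 ≤ A i j) (hdiagpos : ∀ i, 0 < A i i)
    (hsupp : ∀ i j, A i j ≠ 0 → Relation.ReflTransGen E j i)
    (hkey : ∀ i j ℓ, Relation.ReflTransGen E j i → Relation.ReflTransGen E ℓ j →
        A i j * A j ℓ / A j j ≤ A i ℓ) :
    ∀ i j : Fin d, i ≠ j →
      A i j / Real.sqrt (∑ k, (A i k) ^ 2)
        < A j j / Real.sqrt (∑ k, (A j k) ^ 2) := by
  intro i j hij
  -- row norms are positive
  have hsumpos : ∀ m : Fin d, 0 < ∑ k, (A m k) ^ 2 := by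
    intro m
    have h1 : (A m m) ^ 2 ≤ ∑ k, (A m k) ^ 2 :=
      Finset.single_le_sum (f := fun k => (A m k) ^ 2)
        (fun k _ => sq_nonneg _) (Finset.mem_univ m)
    have := pow_pos (hdiagpos m) 2
    linarith
  have hSi : 0 < Real.sqrt (∑ k, (A i k) ^ 2) := Real.sqrt_pos.mpr (hsumpos i)
  have hSj : 0 < Real.sqrt (∑ k, (A j k) ^ 2) := Real.sqrt_pos.mpr (hsumpos j)
  by_cases hz : A i j = 0
  · rw [hz, zero_div]
    exact div_pos (hdiagpos j) hSj
  · have hji : Relation.ReflTransGen E j i := hsupp i j hz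
    have hAji : A j i = 0 := by
      by_contra h
      have hij' : Relation.ReflTransGen E i j := hsupp j i h
      have : Relation.TransGen E i j := by
        rcases (Relation.reflTransGen_iff_eq_or_transGen.mp hij') with h' | h'
        · exact absurd h'.symm hij
        · exact h'
      exact hacyc i (Relation.TransGen.trans_left this hji)
    set c : ℝ := A i j / A j j with hc
    have hcpos : 0 < c := div_pos (lt_of_le_of_ne (hnn i j) (Ne.symm hz)) (hdiagpos j)
    -- pointwise inequality
    have hpt : ∀ k : Fin d, c * A j k ≤ A i k := by
      intro k
      by_cases hk : A j k = 0
      · rw [hk, mul_zero]; exact hnn i k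
      · have hkj : Relation.ReflTransGen E k j := hsupp j k hk
        have := hkey i j k hji hkj
        calc c * A j k = A i j * A j k / A j j := by rw [hc]; ring
        _ ≤ A i k := this
    have hsum : ∑ k, (c * A j k) ^ 2 < ∑ k, (A i k) ^ 2 := by
      apply Finset.sum_lt_sum
      · intro k _
        have h0 : 0 ≤ c * A j k := mul_nonneg hcpos.le (hnn j k)
        exact pow_le_pow_left₀ h0 (hpt k) 2
      · refine ⟨i, Finset.mem_univ i, ?_⟩
        rw [hAji, mul_zero]
        exact pow_lt_pow_left₀ (hdiagpos i) le_rfl two_ne_zero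
    have hfact : ∑ k, (c * A j k) ^ 2 = c ^ 2 * ∑ k, (A j k) ^ 2 := by
      rw [Finset.mul_sum]; congr 1; ext k; ring
    rw [hfact] at hsum
    have hsqrt : c * Real.sqrt (∑ k, (A j k) ^ 2) < Real.sqrt (∑ k, (A i k) ^ 2) := by
      have := Real.sqrt_lt_sqrt (by positivity) hsum
      rwa [Real.sqrt_mul (sq_nonneg c), Real.sqrt_sq hcpos.le] at this
    rw [div_lt_div_iff₀ hSi hSj]
    have h1 : c * Real.sqrt (∑ k, (A j k) ^ 2) * A j j
        < Real.sqrt (∑ k, (A i k) ^ 2) * A j j :=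
      mul_lt_mul_of_pos_right hsqrt (hdiagpos j)
    have hcc : c * A j j = A i j := div_mul_cancel₀ _ (hdiagpos j).ne'
    nlinarith [hcc, h1]
end

section
/- Let X be a standardized recursive max-linear model satisfying a_{ℓℓ}>a_{kℓ} for k≠ℓ. For a≥1, I⊆V, and i,j∈I^c with i≠j, the scaled max-projection M_{i,aj,aI} = X_i ∨ aX_j ∨ max_{k∈I} aX_k has squared scaling σ²_{M_{i,aj,aI}} = Σ_{ℓ∈I∪{j}} a² a_{ℓℓ}² + Σ_{ℓ∈(I∪{j})^c} ( a_{iℓ}² ∨ max_{k∈I∪{j}} a² a_{kℓ}² ). -/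
/-!
Merging `a X_j` into the maximum over `I` turns every coefficient into
`a_{iℓ} ∨ max_{k ∈ I ∪ {j}} a a_{kℓ}`. For `ℓ ∈ I ∪ {j}` the strictly dominant diagonal entry
makes this `a a_{ℓℓ}`, since `i ≠ ℓ` and `a ≥ 1`; for the other columns squaring, being monotone
on nonnegative reals, commutes with the maxima.
-/

namespace Real

variable {ι : Type*} {s : Finset ι} {f : ι → ℝ}

theorem le_finset_biSup {k : ι} (hk : k ∈ s) : f k ≤ ⨆ k ∈ s, f k :=
  le_ciSup₂ (f := fun k (_ : k ∈ s) => f k) ((s.image f).bddAbove.mono <| by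
    rintro _ ⟨_, ⟨k, rfl⟩, hk, rfl⟩
    exact Finset.mem_coe.2 (Finset.mem_image_of_mem f hk)) k hk

theorem finset_biSup_le {c : ℝ} (hc : 0 ≤ c) (h : ∀ k ∈ s, f k ≤ c) : ⨆ k ∈ s, f k ≤ c :=
  Real.iSup_le (fun k => Real.iSup_le (h k) hc) hc

theorem finset_biSup_nonneg (hf : ∀ k ∈ s, 0 ≤ f k) : 0 ≤ ⨆ k ∈ s, f k :=
  Real.iSup_nonneg fun k => Real.iSup_nonneg (hf k)

theorem finset_biSup_eq_of_forall_le {x : ι} (hx : x ∈ s) (hfx : 0 ≤ f x)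
    (hmax : ∀ k ∈ s, f k ≤ f x) : ⨆ k ∈ s, f k = f x :=
  le_antisymm (finset_biSup_le hfx hmax) (le_finset_biSup hx)

variable [DecidableEq ι]

theorem finset_biSup_insert {x : ι} (hf : ∀ k ∈ insert x s, 0 ≤ f k) :
    ⨆ k ∈ insert x s, f k = f x ⊔ ⨆ k ∈ s, f k := by
  have hs : 0 ≤ ⨆ k ∈ s, f k := finset_biSup_nonneg fun k hk => hf k (s.mem_insert_of_mem hk)
  refine le_antisymm (finset_biSup_le (le_max_of_le_right hs) fun k hk => ?_) (max_le ?_ ?_)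
  · rcases Finset.mem_insert.1 hk with rfl | hk
    · exact le_max_left _ _
    · exact le_max_of_le_right (le_finset_biSup hk)
  · exact le_finset_biSup (s.mem_insert_self x)
  · exact finset_biSup_le (finset_biSup_nonneg hf) fun k hk =>
      le_finset_biSup (s.mem_insert_of_mem hk)

theorem max_pow_of_nonneg {x y : ℝ} (hx : 0 ≤ x) (hy : 0 ≤ y) (n : ℕ) :
    (x ⊔ y) ^ n = x ^ n ⊔ y ^ n :=
  pow_left_monotoneOn.map_max hx hy

theorem finset_biSup_pow (hf : ∀ k ∈ s, 0 ≤ f k) {n : ℕ} (hn : n ≠ 0) :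
    (⨆ k ∈ s, f k) ^ n = ⨆ k ∈ s, f k ^ n := by
  induction s using Finset.induction_on with
  | empty => simp [hn]
  | insert x s _ ih =>
    have hfs : ∀ k ∈ s, 0 ≤ f k := fun k hk => hf k (s.mem_insert_of_mem hk)
    rw [finset_biSup_insert hf, finset_biSup_insert fun k hk => pow_nonneg (hf k hk) n,
      max_pow_of_nonneg (hf x (s.mem_insert_self x)) (finset_biSup_nonneg hfs), ih hfs]

end Real

theorem scaled_max_projection_scaling_general {d : ℕ} (A : Fin d → Fin d → ℝ)
    (hnn : ∀ i j, 0 ≤ A i j)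
    (hdiag : ∀ ℓ k, k ≠ ℓ → A k ℓ < A ℓ ℓ)
    (a : ℝ) (ha : 1 ≤ a) (I : Finset (Fin d)) (i j : Fin d)
    (hi : i ∉ I) (hij : i ≠ j) :
    (∑ ℓ, ((A i ℓ) ⊔ (a * A j ℓ) ⊔ (⨆ k ∈ I, a * A k ℓ)) ^ 2)
      = (∑ ℓ ∈ insert j I, a ^ 2 * (A ℓ ℓ) ^ 2)
        + ∑ ℓ ∈ (insert j I)ᶜ,
            ((A i ℓ) ^ 2 ⊔ (⨆ k ∈ insert j I, a ^ 2 * (A k ℓ) ^ 2)) := by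
  have ha0 : 0 ≤ a := zero_le_one.trans ha
  have hscaled : ∀ k ℓ, 0 ≤ a * A k ℓ := fun k ℓ => mul_nonneg ha0 (hnn k ℓ)
  have hcoef : ∀ ℓ, A i ℓ ⊔ a * A j ℓ ⊔ (⨆ k ∈ I, a * A k ℓ)
      = A i ℓ ⊔ ⨆ k ∈ insert j I, a * A k ℓ := fun ℓ => by
    rw [max_assoc, Real.finset_biSup_insert fun k _ => hscaled k ℓ]
  simp_rw [hcoef, ← Finset.sum_add_sum_compl (insert j I)]
  congr 1
  · refine Finset.sum_congr rfl fun ℓ hℓ => ?_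
    have hcol : ∀ k, A k ℓ ≤ A ℓ ℓ := fun k => by
      rcases eq_or_ne k ℓ with rfl | hk
      exacts [le_rfl, (hdiag ℓ k hk).le]
    have hiℓ : i ≠ ℓ := by
      rintro rfl
      exact (Finset.mem_insert.1 hℓ).elim hij hi
    have hAi : A i ℓ ≤ a * A ℓ ℓ := (hdiag ℓ i hiℓ).le.trans (le_mul_of_one_le_left (hnn ℓ ℓ) ha)
    rw [Real.finset_biSup_eq_of_forall_le hℓ (hscaled ℓ ℓ)
        fun k _ => mul_le_mul_of_nonneg_left (hcol k) ha0, max_eq_right hAi, mul_pow]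
  · refine Finset.sum_congr rfl fun ℓ _ => ?_
    rw [Real.max_pow_of_nonneg (hnn i ℓ) (Real.finset_biSup_nonneg fun k _ => hscaled k ℓ),
      Real.finset_biSup_pow (fun k _ => hscaled k ℓ) two_ne_zero]
    simp_rw [mul_pow]

/-- For a standardized recursive max-linear model with
a_{ℓℓ} > a_{kℓ} for k ≠ ℓ, for a ≥ 1, I ⊆ V and i, j ∈ Iᶜ with i ≠ j, the
scaled max-projection M_{i,aj,aI} = X_i ∨ aX_j ∨ max_{k∈I} aX_k, whose
coefficient on Z_ℓ is b_ℓ = a_{iℓ} ∨ a a_{jℓ} ∨ max_{k∈I} a a_{kℓ}, has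
squared scaling Σ_ℓ b_ℓ² = Σ_{ℓ∈I∪{j}} a² a_{ℓℓ}²
+ Σ_{ℓ∈(I∪{j})ᶜ} ( a_{iℓ}² ∨ max_{k∈I∪{j}} a² a_{kℓ}² ). -/
theorem scaled_max_projection_scaling {d : ℕ} (A : Fin d → Fin d → ℝ)
    (hnn : ∀ i j, 0 ≤ A i j)
    (hrow : ∀ i, ∑ j, (A i j) ^ 2 = 1)
    (hdiag : ∀ ℓ k, k ≠ ℓ → A k ℓ < A ℓ ℓ)
    (a : ℝ) (ha : 1 ≤ a) (I : Finset (Fin d)) (i j : Fin d)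
    (hi : i ∉ I) (hj : j ∉ I) (hij : i ≠ j) :
    (∑ ℓ, ((A i ℓ) ⊔ (a * A j ℓ) ⊔ (⨆ k ∈ I, a * A k ℓ)) ^ 2)
      = (∑ ℓ ∈ insert j I, a ^ 2 * (A ℓ ℓ) ^ 2)
        + ∑ ℓ ∈ (insert j I)ᶜ,
            ((A i ℓ) ^ 2 ⊔ (⨆ k ∈ insert j I, a ^ 2 * (A k ℓ) ^ 2)) :=
  scaled_max_projection_scaling_general A hnn hdiag a ha I i j hi hij
end

section
/- Let I⊆V satisfy An(I)∩I^c=∅ (no node of I has an ancestor outside I) and let i,j∉I, i≠j, a≥1. Then σ²_{M_{i,aj,aI}} − σ²_{M_{i,j,I}} = (a²−1)Σ_{ℓ∈I∪{j}} a_{ℓℓ}² + Σ_{ℓ∈I^c∩an(j)} ( a²_{iℓ} ∨ a²a²_{jℓ} − a²_{iℓ} ∨ a²_{jℓ} ). -/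
open scoped BigOperators

private lemma biSup_le_real {ι : Type*} {I : Finset ι} {g : ι → ℝ} {c : ℝ}
    (hc : 0 ≤ c) (h : ∀ k ∈ I, g k ≤ c) : (⨆ k ∈ I, g k) ≤ c :=
  Real.iSup_le (fun k => Real.iSup_le (fun hk => h k hk) hc) hc

private lemma le_biSup_real {ι : Type*} [Finite ι] {I : Finset ι} {g : ι → ℝ} {k : ι}
    (hk : k ∈ I) : g k ≤ ⨆ k ∈ I, g k := by
  refine le_trans ?_ (le_ciSup (Set.Finite.bddAbove (Set.finite_range _)) k)
  exact le_ciSup (f := fun _ : k ∈ I => g k) (Set.Finite.bddAbove (Set.finite_range _)) hk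

private lemma biSup_zero_real {ι : Type*} {I : Finset ι} {g : ι → ℝ}
    (h : ∀ k ∈ I, g k = 0) : (⨆ k ∈ I, g k) = 0 :=
  le_antisymm (biSup_le_real le_rfl (fun k hk => (h k hk).le))
    (Real.iSup_nonneg fun k => Real.iSup_nonneg fun hk => (h k hk).ge)

/-- Let X be a recursive max-linear model on a well-ordered DAG
satisfying Assumptions A (ancestor sets `an`, support condition, standardized
rows, columnwise diagonal dominance). Let I ⊆ V satisfy An(I) ∩ Iᶜ = ∅
(ancestral closure) and let i, j ∉ I, i ≠ j, a ≥ 1. Then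
σ²_{M_{i,aj,aI}} − σ²_{M_{i,j,I}}
 = (a²−1) Σ_{ℓ∈I∪{j}} a_{ℓℓ}²
   + Σ_{ℓ∈Iᶜ∩an(j)} ( a²_{iℓ} ∨ a²a²_{jℓ} − a²_{iℓ} ∨ a²_{jℓ} ),
where σ²_{M_{i,aj,aI}} = Σ_ℓ ( a_{iℓ}² ∨ a²a_{jℓ}² ∨ max_{k∈I} a²a_{kℓ}² ). -/
theorem scaling_difference_identity_set {d : ℕ} (A : Fin d → Fin d → ℝ)
    (an : Fin d → Finset (Fin d))
    (hnn : ∀ i j, 0 ≤ A i j)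
    (hrow : ∀ i, ∑ j, (A i j) ^ 2 = 1)
    (hdiag : ∀ ℓ k, k ≠ ℓ → A k ℓ < A ℓ ℓ)
    (hsupp : ∀ j ℓ, A j ℓ ≠ 0 → ℓ = j ∨ ℓ ∈ an j)
    (hirr : ∀ j, j ∉ an j)
    (hwell : ∀ j ℓ, ℓ ∈ an j → j < ℓ)
    (I : Finset (Fin d)) (hclosed : ∀ i ∈ I, an i ⊆ I)
    (i j : Fin d) (hiI : i ∉ I) (hjI : j ∉ I) (hij : i ≠ j)
    (a : ℝ) (ha : 1 ≤ a) :
    (∑ ℓ, ((A i ℓ) ^ 2 ⊔ (a ^ 2 * (A j ℓ) ^ 2) ⊔ (⨆ k ∈ I, a ^ 2 * (A k ℓ) ^ 2)))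
      - (∑ ℓ, ((A i ℓ) ^ 2 ⊔ ((A j ℓ) ^ 2) ⊔ (⨆ k ∈ I, (A k ℓ) ^ 2)))
    = (a ^ 2 - 1) * (∑ ℓ ∈ insert j I, (A ℓ ℓ) ^ 2)
      + ∑ ℓ ∈ (an j) \ I,
          (((A i ℓ) ^ 2 ⊔ (a ^ 2 * (A j ℓ) ^ 2)) - ((A i ℓ) ^ 2 ⊔ (A j ℓ) ^ 2)) := by
  -- A k ℓ = 0 for k ∈ I whenever ℓ ∉ I
  have hzero : ∀ ℓ, ℓ ∉ I → ∀ k ∈ I, A k ℓ = 0 := by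
    intro ℓ hℓ k hk
    by_contra h
    rcases hsupp k ℓ h with rfl | hmem
    · exact hℓ hk
    · exact hℓ (hclosed k hk hmem)
  -- key evaluation on insert j I, uniform in the scaling b ≥ 1
  have key : ∀ b : ℝ, 1 ≤ b → ∀ ℓ ∈ insert j I,
      (A i ℓ) ^ 2 ⊔ (b * (A j ℓ) ^ 2) ⊔ (⨆ k ∈ I, b * (A k ℓ) ^ 2) = b * (A ℓ ℓ) ^ 2 := by
    intro b hb ℓ hℓ
    have hb0 : (0:ℝ) ≤ b := le_trans zero_le_one hb
    have hBnn : 0 ≤ b * (A ℓ ℓ) ^ 2 := mul_nonneg hb0 (sq_nonneg _)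
    have hsq : ∀ k, k ≠ ℓ → (A k ℓ) ^ 2 ≤ (A ℓ ℓ) ^ 2 := fun k hk =>
      pow_le_pow_left₀ (hnn k ℓ) (le_of_lt (hdiag ℓ k hk)) 2
    have hiℓ : i ≠ ℓ := by
      rcases Finset.mem_insert.mp hℓ with rfl | hℓI
      · exact hij
      · exact fun h => hiI (h ▸ hℓI)
    have h1 : (A i ℓ) ^ 2 ≤ b * (A ℓ ℓ) ^ 2 :=
      le_trans (hsq i hiℓ) (le_mul_of_one_le_left (sq_nonneg _) hb)
    have h2 : b * (A j ℓ) ^ 2 ≤ b * (A ℓ ℓ) ^ 2 := by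
      rcases eq_or_ne j ℓ with rfl | hjℓ
      · exact le_rfl
      · exact mul_le_mul_of_nonneg_left (hsq j hjℓ) hb0
    have h3 : (⨆ k ∈ I, b * (A k ℓ) ^ 2) ≤ b * (A ℓ ℓ) ^ 2 := by
      refine biSup_le_real hBnn (fun k hk => ?_)
      rcases eq_or_ne k ℓ with rfl | hkℓ
      · exact le_rfl
      · exact mul_le_mul_of_nonneg_left (hsq k hkℓ) hb0
    refine le_antisymm (sup_le (sup_le h1 h2) h3) ?_
    rcases Finset.mem_insert.mp hℓ with rfl | hℓI
    · exact le_sup_of_le_left (le_sup_of_le_right le_rfl)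
    · exact le_sup_of_le_right (le_biSup_real (g := fun k => b * (A k ℓ)^2) hℓI)
  have key1 : ∀ ℓ ∈ insert j I,
      (A i ℓ) ^ 2 ⊔ ((A j ℓ) ^ 2) ⊔ (⨆ k ∈ I, (A k ℓ) ^ 2) = (A ℓ ℓ) ^ 2 := by
    intro ℓ hℓ
    have := key 1 le_rfl ℓ hℓ
    simpa using this
  have ha2 : 1 ≤ a ^ 2 := one_le_pow₀ ha
  -- the difference function
  set f : Fin d → ℝ := fun ℓ =>
    ((A i ℓ) ^ 2 ⊔ (a ^ 2 * (A j ℓ) ^ 2) ⊔ (⨆ k ∈ I, a ^ 2 * (A k ℓ) ^ 2))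
      - ((A i ℓ) ^ 2 ⊔ ((A j ℓ) ^ 2) ⊔ (⨆ k ∈ I, (A k ℓ) ^ 2)) with hf
  have hsum : (∑ ℓ, ((A i ℓ) ^ 2 ⊔ (a ^ 2 * (A j ℓ) ^ 2) ⊔ (⨆ k ∈ I, a ^ 2 * (A k ℓ) ^ 2)))
      - (∑ ℓ, ((A i ℓ) ^ 2 ⊔ ((A j ℓ) ^ 2) ⊔ (⨆ k ∈ I, (A k ℓ) ^ 2))) = ∑ ℓ, f ℓ := by
    rw [← Finset.sum_sub_distrib]
  rw [hsum]
  have hdisj : Disjoint (insert j I) (an j \ I) := by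
    rw [Finset.disjoint_left]
    intro k hk hk'
    rcases Finset.mem_insert.mp hk with rfl | hkI
    · exact hirr _ (Finset.mem_sdiff.mp hk').1
    · exact (Finset.mem_sdiff.mp hk').2 hkI
  have hsub : (insert j I) ∪ (an j \ I) ⊆ Finset.univ := Finset.subset_univ _
  have hvanish : ∀ ℓ ∈ Finset.univ, ℓ ∉ (insert j I) ∪ (an j \ I) → f ℓ = 0 := by
    intro ℓ _ hℓ
    rw [Finset.mem_union, not_or, Finset.mem_insert, not_or] at hℓ
    obtain ⟨⟨hℓj, hℓI⟩, hℓan⟩ := hℓ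
    have hℓanj : ℓ ∉ an j := by
      intro h
      exact hℓan (Finset.mem_sdiff.mpr ⟨h, hℓI⟩)
    have hAj : A j ℓ = 0 := by
      by_contra h
      rcases hsupp j ℓ h with h' | h'
      · exact hℓj h'
      · exact hℓanj h'
    have hz := hzero ℓ hℓI
    have hs1 : (⨆ k ∈ I, a ^ 2 * (A k ℓ) ^ 2) = 0 :=
      biSup_zero_real (fun k hk => by rw [hz k hk]; ring)
    have hs2 : (⨆ k ∈ I, (A k ℓ) ^ 2) = 0 :=
      biSup_zero_real (fun k hk => by rw [hz k hk]; ring)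
    simp [hf, hs1, hs2, hAj, sup_eq_left.mpr (sq_nonneg (A i ℓ))]
  rw [← Finset.sum_subset hsub hvanish, Finset.sum_union hdisj]
  congr 1
  · rw [Finset.mul_sum]
    refine Finset.sum_congr rfl (fun ℓ hℓ => ?_)
    simp only [hf]
    rw [key (a^2) ha2 ℓ hℓ, key1 ℓ hℓ]
    ring
  · refine Finset.sum_congr rfl (fun ℓ hℓ => ?_)
    obtain ⟨hℓan, hℓI⟩ := Finset.mem_sdiff.mp hℓ
    have hz := hzero ℓ hℓI
    have hs1 : (⨆ k ∈ I, a ^ 2 * (A k ℓ) ^ 2) = 0 :=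
      biSup_zero_real (fun k hk => by rw [hz k hk]; ring)
    have hs2 : (⨆ k ∈ I, (A k ℓ) ^ 2) = 0 :=
      biSup_zero_real (fun k hk => by rw [hz k hk]; ring)
    have h1 : (0:ℝ) ≤ (A i ℓ) ^ 2 ⊔ (a ^ 2 * (A j ℓ) ^ 2) := le_sup_of_le_left (sq_nonneg _)
    have h2 : (0:ℝ) ≤ (A i ℓ) ^ 2 ⊔ ((A j ℓ) ^ 2) := le_sup_of_le_left (sq_nonneg _)
    simp only [hf]
    simp only [hs1, hs2, sup_eq_left.mpr h1, sup_eq_left.mpr h2]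
end

section
/- Under Assumptions A, a node j is a source node (an(j)=∅) if and only if for some (equivalently every) a>1 and all i≠j: σ²_{M_{i,aj}} − σ²_{M_{ij}} = a²−1. Moreover, if j is not a source node, then σ²_{M_{i,aj}} − σ²_{M_{ij}} ≤ a²−1 for all i≠j, with strict inequality when i∈an(j). -/
open scoped BigOperators

/-- Under Assumptions A (recursive max-linear model encoded by
its standardized coefficient matrix A and ancestor sets `an`), a node j is a
source node (an(j) = ∅) if and only if for every (equivalently, some) a > 1 and
all i ≠ j: σ²_{M_{i,aj}} − σ²_{M_{ij}} = a² − 1. Moreover, if j is not a source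
node, then σ²_{M_{i,aj}} − σ²_{M_{ij}} ≤ a² − 1 for all i ≠ j, with strict
inequality when i ∈ an(j). Here σ²_{M_{i,aj}} = Σ_ℓ (a_{iℓ}² ∨ a²a_{jℓ}²) and
σ²_{M_{ij}} = Σ_ℓ (a_{iℓ}² ∨ a_{jℓ}²). -/
theorem source_node_criterion {d : ℕ} (A : Fin d → Fin d → ℝ)
    (an : Fin d → Finset (Fin d))
    (hnn : ∀ i j, 0 ≤ A i j)
    (hrow : ∀ i, ∑ j, (A i j) ^ 2 = 1)
    (hdiag : ∀ ℓ k, k ≠ ℓ → A k ℓ < A ℓ ℓ)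
    (hsupp : ∀ j ℓ, A j ℓ ≠ 0 → ℓ = j ∨ ℓ ∈ an j)
    (hpos : ∀ j ℓ, ℓ ∈ an j → 0 < A j ℓ)
    (hirr : ∀ j, j ∉ an j)
    (htrans : ∀ j ℓ m, ℓ ∈ an j → m ∈ an ℓ → m ∈ an j)
    (j : Fin d) :
    ((an j = ∅) ↔ ∀ a : ℝ, 1 < a → ∀ i, i ≠ j →
        (∑ ℓ, ((A i ℓ) ^ 2 ⊔ (a ^ 2 * (A j ℓ) ^ 2)))
          - (∑ ℓ, ((A i ℓ) ^ 2 ⊔ (A j ℓ) ^ 2)) = a ^ 2 - 1)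
    ∧ ((an j = ∅) ↔ ∃ a : ℝ, 1 < a ∧ ∀ i, i ≠ j →
        (∑ ℓ, ((A i ℓ) ^ 2 ⊔ (a ^ 2 * (A j ℓ) ^ 2)))
          - (∑ ℓ, ((A i ℓ) ^ 2 ⊔ (A j ℓ) ^ 2)) = a ^ 2 - 1)
    ∧ ((an j ≠ ∅) → ∀ a : ℝ, 1 < a → ∀ i, i ≠ j →
        ((∑ ℓ, ((A i ℓ) ^ 2 ⊔ (a ^ 2 * (A j ℓ) ^ 2)))
            - (∑ ℓ, ((A i ℓ) ^ 2 ⊔ (A j ℓ) ^ 2)) ≤ a ^ 2 - 1)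
        ∧ (i ∈ an j →
          (∑ ℓ, ((A i ℓ) ^ 2 ⊔ (a ^ 2 * (A j ℓ) ^ 2)))
            - (∑ ℓ, ((A i ℓ) ^ 2 ⊔ (A j ℓ) ^ 2)) < a ^ 2 - 1)) := by
  -- termwise upper bound
  have hterm : ∀ (a : ℝ), 1 < a → ∀ i ℓ,
      ((A i ℓ) ^ 2 ⊔ (a ^ 2 * (A j ℓ) ^ 2)) - ((A i ℓ) ^ 2 ⊔ (A j ℓ) ^ 2)
        ≤ (a ^ 2 - 1) * (A j ℓ) ^ 2 := by
    intro a ha i ℓ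
    have h1 : (A i ℓ) ^ 2 ≤ ((A i ℓ) ^ 2 ⊔ (A j ℓ) ^ 2) := le_max_left _ _
    have h2 : (A j ℓ) ^ 2 ≤ ((A i ℓ) ^ 2 ⊔ (A j ℓ) ^ 2) := le_max_right _ _
    have hsq : (0:ℝ) ≤ (A j ℓ) ^ 2 := sq_nonneg _
    have ha2 : (1:ℝ) ≤ a ^ 2 := by nlinarith
    have : ((A i ℓ) ^ 2 ⊔ (a ^ 2 * (A j ℓ) ^ 2))
        ≤ ((A i ℓ) ^ 2 ⊔ (A j ℓ) ^ 2) + (a ^ 2 - 1) * (A j ℓ) ^ 2 := by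
      apply max_le <;> nlinarith
    linarith
  -- the "≤" part, for all i
  have hle : ∀ a : ℝ, 1 < a → ∀ i,
      (∑ ℓ, ((A i ℓ) ^ 2 ⊔ (a ^ 2 * (A j ℓ) ^ 2)))
        - (∑ ℓ, ((A i ℓ) ^ 2 ⊔ (A j ℓ) ^ 2)) ≤ a ^ 2 - 1 := by
    intro a ha i
    rw [← Finset.sum_sub_distrib]
    calc ∑ ℓ, (((A i ℓ) ^ 2 ⊔ (a ^ 2 * (A j ℓ) ^ 2)) - ((A i ℓ) ^ 2 ⊔ (A j ℓ) ^ 2))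
        ≤ ∑ ℓ, (a ^ 2 - 1) * (A j ℓ) ^ 2 :=
          Finset.sum_le_sum fun ℓ _ => hterm a ha i ℓ
      _ = a ^ 2 - 1 := by rw [← Finset.mul_sum, hrow j]; ring
  -- the strict part when i ∈ an j
  have hlt : ∀ a : ℝ, 1 < a → ∀ i, i ∈ an j →
      (∑ ℓ, ((A i ℓ) ^ 2 ⊔ (a ^ 2 * (A j ℓ) ^ 2)))
        - (∑ ℓ, ((A i ℓ) ^ 2 ⊔ (A j ℓ) ^ 2)) < a ^ 2 - 1 := by
    intro a ha i hi
    have hij : i ≠ j := fun h => hirr j (h ▸ hi)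
    have hAji : 0 < A j i := hpos j i hi
    have hdd : A j i < A i i := hdiag i j hij.symm
    have hstrict : ((A i i) ^ 2 ⊔ (a ^ 2 * (A j i) ^ 2)) - ((A i i) ^ 2 ⊔ (A j i) ^ 2)
        < (a ^ 2 - 1) * (A j i) ^ 2 := by
      have h1 : (A j i) ^ 2 < (A i i) ^ 2 := by nlinarith
      rw [max_eq_left h1.le]
      have ha2 : (1:ℝ) < a ^ 2 := by nlinarith
      have hp : 0 < (a ^ 2 - 1) * (A j i) ^ 2 :=
        mul_pos (by linarith) (by positivity)
      rcases le_or_gt (a ^ 2 * (A j i) ^ 2) ((A i i) ^ 2) with h | h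
      · rw [max_eq_left h]; linarith
      · rw [max_eq_right h.le]; nlinarith
    rw [← Finset.sum_sub_distrib]
    calc ∑ ℓ, (((A i ℓ) ^ 2 ⊔ (a ^ 2 * (A j ℓ) ^ 2)) - ((A i ℓ) ^ 2 ⊔ (A j ℓ) ^ 2))
        < ∑ ℓ, (a ^ 2 - 1) * (A j ℓ) ^ 2 :=
          Finset.sum_lt_sum (fun ℓ _ => hterm a ha i ℓ)
            ⟨i, Finset.mem_univ i, hstrict⟩
      _ = a ^ 2 - 1 := by rw [← Finset.mul_sum, hrow j]; ring
  -- equality when j is a source node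
  have heq : an j = ∅ → ∀ a : ℝ, 1 < a → ∀ i, i ≠ j →
      (∑ ℓ, ((A i ℓ) ^ 2 ⊔ (a ^ 2 * (A j ℓ) ^ 2)))
        - (∑ ℓ, ((A i ℓ) ^ 2 ⊔ (A j ℓ) ^ 2)) = a ^ 2 - 1 := by
    intro hsrc a ha i hij
    have hz : ∀ ℓ, ℓ ≠ j → A j ℓ = 0 := by
      intro ℓ hℓ
      by_contra h
      rcases hsupp j ℓ h with h1 | h1
      · exact hℓ h1
      · rw [hsrc] at h1; exact absurd h1 (Finset.notMem_empty ℓ)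
    have hAjj : A j j = 1 := by
      have hr := hrow j
      rw [Finset.sum_eq_single j (fun ℓ _ hℓ => by rw [hz ℓ hℓ]; ring)
        (fun h => absurd (Finset.mem_univ j) h)] at hr
      nlinarith [hnn j j]
    have hlt1 : (A i j) ^ 2 < 1 := by
      have := hdiag j i hij
      rw [hAjj] at this
      nlinarith [hnn i j]
    have ha2 : (1:ℝ) ≤ a ^ 2 := by nlinarith
    rw [← Finset.sum_sub_distrib,
      Finset.sum_eq_single j
        (fun ℓ _ hℓ => by rw [hz ℓ hℓ]; simp)
        (fun h => absurd (Finset.mem_univ j) h), hAjj,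
      max_eq_right (by nlinarith : (A i j) ^ 2 ≤ a ^ 2 * 1 ^ 2),
      max_eq_right (by nlinarith : (A i j) ^ 2 ≤ (1:ℝ) ^ 2)]
    ring
  -- assemble
  refine ⟨⟨fun h => heq h, fun h => ?_⟩,
    ⟨fun h => ⟨2, one_lt_two, heq h 2 one_lt_two⟩, fun ⟨a, ha, h⟩ => ?_⟩,
    fun _ a ha i _ => ⟨hle a ha i, fun hi => hlt a ha i hi⟩⟩
  · by_contra hne
    obtain ⟨i, hi⟩ := Finset.nonempty_iff_ne_empty.mpr hne
    have hij : i ≠ j := fun hh => hirr j (hh ▸ hi)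
    have := h 2 one_lt_two i hij
    have := hlt 2 one_lt_two i hi
    linarith
  · by_contra hne
    obtain ⟨i, hi⟩ := Finset.nonempty_iff_ne_empty.mpr hne
    have hij : i ≠ j := fun hh => hirr j (hh ▸ hi)
    have := h i hij
    have := hlt a ha i hi
    linarith
end

section
/- Under Assumptions A, let O⊆V be a set of nodes with An(O)∩O^c=∅. Then j∈O^c satisfies an(j)∩O^c=∅ if and only if for some (equivalently every) a>1: σ²_{M_{i,aj,aO}} − σ²_{M_{i,j,O}} = (a²−1)σ²_{M_{j,O}} for all i∉O∪{j}. If instead an(j)∩O^c≠∅, then σ²_{M_{i,aj,aO}} − σ²_{M_{i,j,O}} ≤ (a²−1)σ²_{M_{j,O}} for all i∉O∪{j}, with strict inequality when i∈O^c∩an(j). -/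
/-!
Let `B ℓ = a_{jℓ}² ∨ max_{k∈O} a_{kℓ}²` (`maxCoeffSq`), the squared coefficient of `Z_ℓ` in `M_{j,O}`.
Since `a² ≥ 0` can be pulled out of every maximum, the gap `σ²_{M_{i,aj,aO}} − σ²_{M_{i,j,O}}`
is `Σ_ℓ (a_{iℓ}² ∨ a²B ℓ) − (a_{iℓ}² ∨ B ℓ)`, and each summand is at most `(a² − 1) B ℓ`, with
equality when `a_{iℓ}² ≤ B ℓ` or `B ℓ = 0` and strict inequality when `0 < B ℓ < a_{iℓ}²`.
If `an(j) ⊆ O`, every `ℓ` is either in `O ∪ {j}`, where the diagonal dominance `a_{iℓ} < a_{ℓℓ}`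
gives `a_{iℓ}² ≤ B ℓ`, or outside it, where `B ℓ = 0` because `O` is ancestrally closed.
If `i ∈ an(j) \ O`, the summand `ℓ = i` is strict: `0 < a_{ji}² ≤ B i < a_{ii}²`.
-/

noncomputable def maxCoeffSq {d : ℕ} (A : Fin d → Fin d → ℝ) (j : Fin d) (O : Finset (Fin d))
    (ℓ : Fin d) : ℝ :=
  (A j ℓ) ^ 2 ⊔ ⨆ k ∈ O, (A k ℓ) ^ 2

/-- `σ²_{M_{i,aj,aO}} − σ²_{M_{i,j,O}}`. -/
noncomputable def scalingSqGap {d : ℕ} (A : Fin d → Fin d → ℝ) (i j : Fin d)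
    (O : Finset (Fin d)) (a : ℝ) : ℝ :=
  (∑ ℓ, ((A i ℓ) ^ 2 ⊔ (a ^ 2 * (A j ℓ) ^ 2) ⊔ (⨆ k ∈ O, a ^ 2 * (A k ℓ) ^ 2)))
    - (∑ ℓ, ((A i ℓ) ^ 2 ⊔ ((A j ℓ) ^ 2) ⊔ (⨆ k ∈ O, (A k ℓ) ^ 2)))

section SupArithmetic

variable {x B c : ℝ}

lemma sup_mul_sub_sup_le (hB : 0 ≤ B) (hc : 1 ≤ c) : (x ⊔ c * B) - (x ⊔ B) ≤ (c - 1) * B := by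
  have hgap : 0 ≤ (c - 1) * B := mul_nonneg (by linarith) hB
  have : x ⊔ c * B ≤ (x ⊔ B) + (c - 1) * B :=
    sup_le (by linarith [le_sup_left (a := x) (b := B)])
      (by linarith [le_sup_right (a := x) (b := B)])
  linarith

lemma sup_mul_sub_sup_eq_of_le (hB : 0 ≤ B) (hc : 1 ≤ c) (hxB : x ≤ B) :
    (x ⊔ c * B) - (x ⊔ B) = (c - 1) * B := by
  have hBc : B ≤ c * B := le_mul_of_one_le_left hB hc
  rw [sup_eq_right.mpr hxB, sup_eq_right.mpr (hxB.trans hBc)]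
  ring

lemma sup_mul_sub_sup_lt (hB : 0 < B) (hBx : B < x) (hc : 1 < c) :
    (x ⊔ c * B) - (x ⊔ B) < (c - 1) * B := by
  have hgap : 0 < (c - 1) * B := mul_pos (by linarith) hB
  have : x ⊔ c * B < x + (c - 1) * B := max_lt (by linarith) (by linarith)
  rw [sup_eq_left.mpr hBx.le]
  linarith

end SupArithmetic

section FiniteBiSup

variable {ι : Type*} {s : Finset ι} {f : ι → ℝ}

lemma Real.biSup_nonneg (hf : ∀ k ∈ s, 0 ≤ f k) : 0 ≤ ⨆ k ∈ s, f k :=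
  Real.iSup_nonneg fun k => Real.iSup_nonneg fun hk => hf k hk

lemma Real.mul_biSup_of_nonneg {r : ℝ} (hr : 0 ≤ r) (s : Finset ι) (f : ι → ℝ) :
    r * ⨆ k ∈ s, f k = ⨆ k ∈ s, r * f k := by
  simp only [Real.mul_iSup_of_nonneg hr]

lemma Real.biSup_eq_zero (hf : ∀ k ∈ s, f k = 0) : ⨆ k ∈ s, f k = 0 :=
  le_antisymm (Real.iSup_le (fun k => Real.iSup_le (fun hk => (hf k hk).le) le_rfl) le_rfl)
    (Real.biSup_nonneg fun k hk => (hf k hk).ge)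

variable [Finite ι]

lemma Real.le_biSup {k : ι} (hk : k ∈ s) : f k ≤ ⨆ k ∈ s, f k :=
  le_ciSup_of_le (Set.finite_range _).bddAbove k (by rw [ciSup_pos hk])

lemma Real.biSup_lt {x : ℝ} (hx : 0 < x) (hf : ∀ k ∈ s, f k < x) : ⨆ k ∈ s, f k < x := by
  rcases isEmpty_or_nonempty ι with hι | hι
  · simpa using hx
  obtain ⟨k, hk⟩ := exists_eq_ciSup_of_finite (f := fun k => ⨆ _ : k ∈ s, f k)
  rw [← hk]
  by_cases hks : k ∈ s
  · simpa [ciSup_pos hks] using hf k hks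
  · simpa [hks] using hx

end FiniteBiSup

section ScalingGap

variable {d : ℕ} {A : Fin d → Fin d → ℝ} {an : Fin d → Finset (Fin d)} {O : Finset (Fin d)}
  {i j ℓ : Fin d} {a : ℝ}

lemma maxCoeffSq_nonneg : 0 ≤ maxCoeffSq A j O ℓ :=
  le_sup_of_le_left (sq_nonneg _)

lemma scalingSqGap_eq_sum : scalingSqGap A i j O a =
    ∑ ℓ, ((A i ℓ ^ 2 ⊔ a ^ 2 * maxCoeffSq A j O ℓ) - (A i ℓ ^ 2 ⊔ maxCoeffSq A j O ℓ)) := by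
  rw [scalingSqGap, ← Finset.sum_sub_distrib]
  refine Finset.sum_congr rfl fun ℓ _ => ?_
  rw [maxCoeffSq, mul_max_of_nonneg _ _ (sq_nonneg a),
    Real.mul_biSup_of_nonneg (sq_nonneg a), sup_assoc, sup_assoc]

lemma scalingSqGap_le (ha : 1 ≤ a) :
    scalingSqGap A i j O a ≤ (a ^ 2 - 1) * ∑ ℓ, maxCoeffSq A j O ℓ := by
  rw [scalingSqGap_eq_sum, Finset.mul_sum]
  exact Finset.sum_le_sum fun ℓ _ => sup_mul_sub_sup_le maxCoeffSq_nonneg (one_le_pow₀ ha)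

lemma scalingSqGap_eq_of_forall (ha : 1 ≤ a)
    (h : ∀ ℓ, A i ℓ ^ 2 ≤ maxCoeffSq A j O ℓ ∨ maxCoeffSq A j O ℓ = 0) :
    scalingSqGap A i j O a = (a ^ 2 - 1) * ∑ ℓ, maxCoeffSq A j O ℓ := by
  rw [scalingSqGap_eq_sum, Finset.mul_sum]
  refine Finset.sum_congr rfl fun ℓ _ => ?_
  rcases h ℓ with hle | hzero
  · exact sup_mul_sub_sup_eq_of_le maxCoeffSq_nonneg (one_le_pow₀ ha) hle
  · simp [hzero]

lemma scalingSqGap_lt_of_exists (ha : 1 < a)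
    (h : ∃ ℓ, 0 < maxCoeffSq A j O ℓ ∧ maxCoeffSq A j O ℓ < A i ℓ ^ 2) :
    scalingSqGap A i j O a < (a ^ 2 - 1) * ∑ ℓ, maxCoeffSq A j O ℓ := by
  obtain ⟨ℓ, hpos, hlt⟩ := h
  rw [scalingSqGap_eq_sum, Finset.mul_sum]
  exact Finset.sum_lt_sum
    (fun ℓ _ => sup_mul_sub_sup_le maxCoeffSq_nonneg (one_le_pow₀ ha.le))
    ⟨ℓ, Finset.mem_univ ℓ, sup_mul_sub_sup_lt hpos hlt (one_lt_pow₀ ha two_ne_zero)⟩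

lemma sq_le_maxCoeffSq (hnn : ∀ i j, 0 ≤ A i j) (hdiag : ∀ ℓ k, k ≠ ℓ → A k ℓ < A ℓ ℓ)
    (hℓ : ℓ ∈ insert j O) (hiℓ : i ≠ ℓ) : A i ℓ ^ 2 ≤ maxCoeffSq A j O ℓ := by
  have hdom : A i ℓ ^ 2 ≤ A ℓ ℓ ^ 2 := pow_le_pow_left₀ (hnn i ℓ) (hdiag ℓ i hiℓ).le 2
  rcases Finset.mem_insert.mp hℓ with rfl | hℓO
  · exact le_sup_of_le_left hdom
  · exact le_sup_of_le_right (hdom.trans (Real.le_biSup (f := fun k => A k ℓ ^ 2) hℓO))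

lemma maxCoeffSq_eq_zero (hsupp : ∀ j ℓ, A j ℓ ≠ 0 → ℓ = j ∨ ℓ ∈ an j)
    (hclosed : ∀ i ∈ O, an i ⊆ O) (hsub : an j ⊆ O) (hℓ : ℓ ∉ insert j O) :
    maxCoeffSq A j O ℓ = 0 := by
  obtain ⟨hℓj, hℓO⟩ := not_or.mp (Finset.mem_insert.not.mp hℓ)
  have hzero : ∀ k, ℓ ≠ k → ℓ ∉ an k → A k ℓ = 0 := fun k hne hnot => by
    by_contra h
    exact (hsupp k ℓ h).elim hne hnot
  have hj : A j ℓ = 0 := hzero j hℓj fun h => hℓO (hsub h)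
  have hO : ∀ k ∈ O, A k ℓ ^ 2 = 0 := fun k hk => by
    rw [hzero k (fun h => hℓO (h ▸ hk)) fun h => hℓO (hclosed k hk h)]
    norm_num
  rw [maxCoeffSq, hj, Real.biSup_eq_zero hO]
  norm_num

lemma maxCoeffSq_lt_sq_diag (hnn : ∀ i j, 0 ≤ A i j) (hdiag : ∀ ℓ k, k ≠ ℓ → A k ℓ < A ℓ ℓ)
    (hji : j ≠ i) (hiO : i ∉ O) : maxCoeffSq A j O i < A i i ^ 2 := by
  have hsq : ∀ k, k ≠ i → A k i ^ 2 < A i i ^ 2 := fun k hk =>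
    pow_lt_pow_left₀ (hdiag i k hk) (hnn k i) two_ne_zero
  have hii : 0 < A i i ^ 2 := (sq_nonneg _).trans_lt (hsq j hji)
  exact max_lt (hsq j hji) (Real.biSup_lt hii fun k hk => hsq k fun h => hiO (h ▸ hk))

lemma scalingSqGap_eq_of_ancestors_subset (hnn : ∀ i j, 0 ≤ A i j)
    (hdiag : ∀ ℓ k, k ≠ ℓ → A k ℓ < A ℓ ℓ) (hsupp : ∀ j ℓ, A j ℓ ≠ 0 → ℓ = j ∨ ℓ ∈ an j)
    (hclosed : ∀ i ∈ O, an i ⊆ O) (hsub : an j ⊆ O) (hi : i ∉ insert j O) (ha : 1 ≤ a) :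
    scalingSqGap A i j O a = (a ^ 2 - 1) * ∑ ℓ, maxCoeffSq A j O ℓ := by
  refine scalingSqGap_eq_of_forall ha fun ℓ => ?_
  by_cases hℓ : ℓ ∈ insert j O
  · exact Or.inl (sq_le_maxCoeffSq hnn hdiag hℓ fun h => hi (h ▸ hℓ))
  · exact Or.inr (maxCoeffSq_eq_zero hsupp hclosed hsub hℓ)

lemma scalingSqGap_lt_of_mem_ancestors (hnn : ∀ i j, 0 ≤ A i j)
    (hdiag : ∀ ℓ k, k ≠ ℓ → A k ℓ < A ℓ ℓ) (hpos : ∀ j ℓ, ℓ ∈ an j → 0 < A j ℓ)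
    (hirr : ∀ j, j ∉ an j) (hi : i ∈ an j \ O) (ha : 1 < a) :
    scalingSqGap A i j O a < (a ^ 2 - 1) * ∑ ℓ, maxCoeffSq A j O ℓ := by
  obtain ⟨hij, hiO⟩ := Finset.mem_sdiff.mp hi
  have hji : j ≠ i := fun h => hirr j (h ▸ hij)
  have hB : 0 < maxCoeffSq A j O i := lt_sup_of_lt_left (pow_pos (hpos j i hij) 2)
  exact scalingSqGap_lt_of_exists ha ⟨i, hB, maxCoeffSq_lt_sq_diag hnn hdiag hji hiO⟩

end ScalingGap

theorem ordering_criterion_general {d : ℕ} (A : Fin d → Fin d → ℝ)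
    (an : Fin d → Finset (Fin d))
    (hnn : ∀ i j, 0 ≤ A i j)
    (hdiag : ∀ ℓ k, k ≠ ℓ → A k ℓ < A ℓ ℓ)
    (hsupp : ∀ j ℓ, A j ℓ ≠ 0 → ℓ = j ∨ ℓ ∈ an j)
    (hpos : ∀ j ℓ, ℓ ∈ an j → 0 < A j ℓ)
    (hirr : ∀ j, j ∉ an j)
    (O : Finset (Fin d)) (hclosed : ∀ i ∈ O, an i ⊆ O)
    (j : Fin d) :
    ((an j ⊆ O) ↔ ∀ a : ℝ, 1 < a → ∀ i, i ∉ insert j O →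
        (∑ ℓ, ((A i ℓ) ^ 2 ⊔ (a ^ 2 * (A j ℓ) ^ 2) ⊔ (⨆ k ∈ O, a ^ 2 * (A k ℓ) ^ 2)))
          - (∑ ℓ, ((A i ℓ) ^ 2 ⊔ ((A j ℓ) ^ 2) ⊔ (⨆ k ∈ O, (A k ℓ) ^ 2)))
        = (a ^ 2 - 1) * (∑ ℓ, ((A j ℓ) ^ 2 ⊔ (⨆ k ∈ O, (A k ℓ) ^ 2))))
    ∧ ((an j ⊆ O) ↔ ∃ a : ℝ, 1 < a ∧ ∀ i, i ∉ insert j O →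
        (∑ ℓ, ((A i ℓ) ^ 2 ⊔ (a ^ 2 * (A j ℓ) ^ 2) ⊔ (⨆ k ∈ O, a ^ 2 * (A k ℓ) ^ 2)))
          - (∑ ℓ, ((A i ℓ) ^ 2 ⊔ ((A j ℓ) ^ 2) ⊔ (⨆ k ∈ O, (A k ℓ) ^ 2)))
        = (a ^ 2 - 1) * (∑ ℓ, ((A j ℓ) ^ 2 ⊔ (⨆ k ∈ O, (A k ℓ) ^ 2))))
    ∧ (¬ (an j ⊆ O) → ∀ a : ℝ, 1 < a → ∀ i, i ∉ insert j O →
        ((∑ ℓ, ((A i ℓ) ^ 2 ⊔ (a ^ 2 * (A j ℓ) ^ 2) ⊔ (⨆ k ∈ O, a ^ 2 * (A k ℓ) ^ 2)))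
            - (∑ ℓ, ((A i ℓ) ^ 2 ⊔ ((A j ℓ) ^ 2) ⊔ (⨆ k ∈ O, (A k ℓ) ^ 2)))
          ≤ (a ^ 2 - 1) * (∑ ℓ, ((A j ℓ) ^ 2 ⊔ (⨆ k ∈ O, (A k ℓ) ^ 2))))
        ∧ (i ∈ an j \ O →
          (∑ ℓ, ((A i ℓ) ^ 2 ⊔ (a ^ 2 * (A j ℓ) ^ 2) ⊔ (⨆ k ∈ O, a ^ 2 * (A k ℓ) ^ 2)))
              - (∑ ℓ, ((A i ℓ) ^ 2 ⊔ ((A j ℓ) ^ 2) ⊔ (⨆ k ∈ O, (A k ℓ) ^ 2)))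
            < (a ^ 2 - 1) * (∑ ℓ, ((A j ℓ) ^ 2 ⊔ (⨆ k ∈ O, (A k ℓ) ^ 2))))) := by
  have heq : an j ⊆ O → ∀ a : ℝ, 1 < a → ∀ i, i ∉ insert j O →
      scalingSqGap A i j O a = (a ^ 2 - 1) * ∑ ℓ, maxCoeffSq A j O ℓ :=
    fun hsub a ha i hi =>
      scalingSqGap_eq_of_ancestors_subset hnn hdiag hsupp hclosed hsub hi ha.le
  -- an ancestor `i ∉ O` of `j` would be a node where the equality fails strictly
  have hsub : ∀ a : ℝ, 1 < a → (∀ i, i ∉ insert j O →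
      scalingSqGap A i j O a = (a ^ 2 - 1) * ∑ ℓ, maxCoeffSq A j O ℓ) → an j ⊆ O := by
    intro a ha h i hij
    by_contra hiO
    have hi : i ∈ an j \ O := Finset.mem_sdiff.mpr ⟨hij, hiO⟩
    have hne : i ∉ insert j O := by
      simp only [Finset.mem_insert, not_or]
      exact ⟨fun h => hirr j (h ▸ hij), hiO⟩
    exact (scalingSqGap_lt_of_mem_ancestors hnn hdiag hpos hirr hi ha).ne (h i hne)
  refine ⟨⟨heq, fun h => hsub 2 one_lt_two (h 2 one_lt_two)⟩,
    ⟨fun h => ⟨2, one_lt_two, heq h 2 one_lt_two⟩, fun ⟨a, ha, h⟩ => hsub a ha h⟩,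
    fun _ a ha i _ => ⟨scalingSqGap_le ha.le,
      fun hi => scalingSqGap_lt_of_mem_ancestors hnn hdiag hpos hirr hi ha⟩⟩

/-- Under Assumptions A, let O ⊆ V satisfy An(O) ∩ Oᶜ = ∅.
Then j ∈ Oᶜ satisfies an(j) ∩ Oᶜ = ∅ (i.e. an(j) ⊆ O) if and only if for every
(equivalently, some) a > 1:
σ²_{M_{i,aj,aO}} − σ²_{M_{i,j,O}} = (a²−1)σ²_{M_{j,O}} for all i ∉ O ∪ {j}.
If instead an(j) ∩ Oᶜ ≠ ∅, then ≤ holds for all i ∉ O ∪ {j}, with strict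
inequality when i ∈ Oᶜ ∩ an(j). Here
σ²_{M_{i,aj,aO}} = Σ_ℓ (a_{iℓ}² ∨ a²a_{jℓ}² ∨ max_{k∈O} a²a_{kℓ}²) and
σ²_{M_{j,O}} = Σ_ℓ (a_{jℓ}² ∨ max_{k∈O} a_{kℓ}²). -/
theorem ordering_criterion {d : ℕ} (A : Fin d → Fin d → ℝ)
    (an : Fin d → Finset (Fin d))
    (hnn : ∀ i j, 0 ≤ A i j)
    (hrow : ∀ i, ∑ j, (A i j) ^ 2 = 1)
    (hdiag : ∀ ℓ k, k ≠ ℓ → A k ℓ < A ℓ ℓ)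
    (hsupp : ∀ j ℓ, A j ℓ ≠ 0 → ℓ = j ∨ ℓ ∈ an j)
    (hpos : ∀ j ℓ, ℓ ∈ an j → 0 < A j ℓ)
    (hirr : ∀ j, j ∉ an j)
    (htrans : ∀ j ℓ m, ℓ ∈ an j → m ∈ an ℓ → m ∈ an j)
    (O : Finset (Fin d)) (hclosed : ∀ i ∈ O, an i ⊆ O)
    (j : Fin d) (hjO : j ∉ O) :
    ((an j ⊆ O) ↔ ∀ a : ℝ, 1 < a → ∀ i, i ∉ insert j O →
        (∑ ℓ, ((A i ℓ) ^ 2 ⊔ (a ^ 2 * (A j ℓ) ^ 2) ⊔ (⨆ k ∈ O, a ^ 2 * (A k ℓ) ^ 2)))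
          - (∑ ℓ, ((A i ℓ) ^ 2 ⊔ ((A j ℓ) ^ 2) ⊔ (⨆ k ∈ O, (A k ℓ) ^ 2)))
        = (a ^ 2 - 1) * (∑ ℓ, ((A j ℓ) ^ 2 ⊔ (⨆ k ∈ O, (A k ℓ) ^ 2))))
    ∧ ((an j ⊆ O) ↔ ∃ a : ℝ, 1 < a ∧ ∀ i, i ∉ insert j O →
        (∑ ℓ, ((A i ℓ) ^ 2 ⊔ (a ^ 2 * (A j ℓ) ^ 2) ⊔ (⨆ k ∈ O, a ^ 2 * (A k ℓ) ^ 2)))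
          - (∑ ℓ, ((A i ℓ) ^ 2 ⊔ ((A j ℓ) ^ 2) ⊔ (⨆ k ∈ O, (A k ℓ) ^ 2)))
        = (a ^ 2 - 1) * (∑ ℓ, ((A j ℓ) ^ 2 ⊔ (⨆ k ∈ O, (A k ℓ) ^ 2))))
    ∧ (¬ (an j ⊆ O) → ∀ a : ℝ, 1 < a → ∀ i, i ∉ insert j O →
        ((∑ ℓ, ((A i ℓ) ^ 2 ⊔ (a ^ 2 * (A j ℓ) ^ 2) ⊔ (⨆ k ∈ O, a ^ 2 * (A k ℓ) ^ 2)))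
            - (∑ ℓ, ((A i ℓ) ^ 2 ⊔ ((A j ℓ) ^ 2) ⊔ (⨆ k ∈ O, (A k ℓ) ^ 2)))
          ≤ (a ^ 2 - 1) * (∑ ℓ, ((A j ℓ) ^ 2 ⊔ (⨆ k ∈ O, (A k ℓ) ^ 2))))
        ∧ (i ∈ an j \ O →
          (∑ ℓ, ((A i ℓ) ^ 2 ⊔ (a ^ 2 * (A j ℓ) ^ 2) ⊔ (⨆ k ∈ O, a ^ 2 * (A k ℓ) ^ 2)))
              - (∑ ℓ, ((A i ℓ) ^ 2 ⊔ ((A j ℓ) ^ 2) ⊔ (⨆ k ∈ O, (A k ℓ) ^ 2)))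
            < (a ^ 2 - 1) * (∑ ℓ, ((A j ℓ) ^ 2 ⊔ (⨆ k ∈ O, (A k ℓ) ^ 2))))) :=
  ordering_criterion_general A an hnn hdiag hsupp hpos hirr O hclosed j
end

section
/- Under Assumptions A with ordered set O satisfying An(O)∩O^c=∅ and a>1: if two distinct nodes j₁, j₂ ∈ O^c both satisfy σ²_{M_{i,aj,aO}} − σ²_{M_{i,j,O}} = (a²−1)σ²_{M_{j,O}} for all i∉O∪{j}, then j₁∉an(j₂) and j₂∉an(j₁). -/
open scoped BigOperators

private lemma term_bound {b x m : ℝ} (hb : 1 < b) (hx : 0 ≤ x) (hm : 0 ≤ m) :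
    x ⊔ (b * m) - x ⊔ m ≤ (b - 1) * m := by
  rcases le_total x m with h | h
  · rw [sup_eq_right.2 h, sup_eq_right.2 (h.trans (le_mul_of_one_le_left hm hb.le))]
    nlinarith
  · rw [sup_eq_left.2 h]
    rcases le_total x (b * m) with h2 | h2
    · rw [sup_eq_right.2 h2]; nlinarith
    · rw [sup_eq_left.2 h2]; nlinarith

private lemma term_bound_lt {b x m : ℝ} (hb : 1 < b) (hm : 0 < m) (hmx : m < x) :
    x ⊔ (b * m) - x ⊔ m < (b - 1) * m := by
  rw [sup_eq_left.2 hmx.le]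
  rcases le_total x (b * m) with h2 | h2
  · rw [sup_eq_right.2 h2]; nlinarith
  · rw [sup_eq_left.2 h2]; nlinarith

private lemma crit_contra {d : ℕ} (A : Fin d → Fin d → ℝ) (hnn : ∀ i j, 0 ≤ A i j)
    (hdiag : ∀ ℓ k, k ≠ ℓ → A k ℓ < A ℓ ℓ)
    (O : Finset (Fin d)) (a : ℝ) (ha : 1 < a)
    (i j : Fin d) (hiO : i ∉ O) (hij : 0 < A j i) (hji : A j i < A i i) :
    (∑ ℓ, ((A i ℓ) ^ 2 ⊔ (a ^ 2 * (A j ℓ) ^ 2) ⊔ (⨆ k ∈ O, a ^ 2 * (A k ℓ) ^ 2)))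
      - (∑ ℓ, ((A i ℓ) ^ 2 ⊔ ((A j ℓ) ^ 2) ⊔ (⨆ k ∈ O, (A k ℓ) ^ 2)))
    < (a ^ 2 - 1) * (∑ ℓ, ((A j ℓ) ^ 2 ⊔ (⨆ k ∈ O, (A k ℓ) ^ 2))) := by
  have hb : (1 : ℝ) < a ^ 2 := by nlinarith
  have hb0 : (0 : ℝ) ≤ a ^ 2 := by positivity
  set m : Fin d → ℝ := fun ℓ => (A j ℓ) ^ 2 ⊔ (⨆ k ∈ O, (A k ℓ) ^ 2) with hm_def
  have hm0 : ∀ ℓ, 0 ≤ m ℓ := fun ℓ => le_sup_of_le_left (sq_nonneg _)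
  have h1 : ∀ ℓ, (A i ℓ) ^ 2 ⊔ (a ^ 2 * (A j ℓ) ^ 2) ⊔ (⨆ k ∈ O, a ^ 2 * (A k ℓ) ^ 2)
      = (A i ℓ) ^ 2 ⊔ (a ^ 2 * m ℓ) := by
    intro ℓ
    have hs : (⨆ k ∈ O, a ^ 2 * (A k ℓ) ^ 2) = a ^ 2 * (⨆ k ∈ O, (A k ℓ) ^ 2) := by
      rw [Real.mul_iSup_of_nonneg hb0]
      exact iSup_congr fun k => (Real.mul_iSup_of_nonneg hb0 _).symm
    rw [hs, hm_def, mul_max_of_nonneg _ _ hb0, sup_assoc]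
  have h2 : ∀ ℓ, (A i ℓ) ^ 2 ⊔ ((A j ℓ) ^ 2) ⊔ (⨆ k ∈ O, (A k ℓ) ^ 2)
      = (A i ℓ) ^ 2 ⊔ m ℓ := fun ℓ => sup_assoc ..
  simp only [h1, h2]
  rw [← Finset.sum_sub_distrib, Finset.mul_sum]
  apply Finset.sum_lt_sum
  · intro ℓ _
    exact term_bound hb (sq_nonneg _) (hm0 ℓ)
  · refine ⟨i, Finset.mem_univ i, ?_⟩
    apply term_bound_lt hb
    · exact lt_sup_of_lt_left (by positivity)
    · have hx : 0 < A i i := hij.trans hji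
      have hyx : (A j i) ^ 2 < (A i i) ^ 2 := pow_lt_pow_left₀ hji (hnn j i) two_ne_zero
      have hne' : (Finset.univ : Finset (Fin d)).Nonempty := ⟨i, Finset.mem_univ i⟩
      set g : Fin d → ℝ := fun k => if k ∈ O then (A k i) ^ 2 else 0 with hg_def
      have hB0 : 0 ≤ Finset.univ.sup' hne' g := by
        have h0 : g i = 0 := if_neg hiO
        calc (0 : ℝ) = g i := h0.symm
          _ ≤ _ := Finset.le_sup' g (Finset.mem_univ i)
      have hs_le : (⨆ k ∈ O, (A k i) ^ 2) ≤ Finset.univ.sup' hne' g := by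
        refine Real.iSup_le (fun k => Real.iSup_le (fun hk => ?_) hB0) hB0
        have : g k = (A k i) ^ 2 := if_pos hk
        rw [← this]
        exact Finset.le_sup' g (Finset.mem_univ k)
      have hB_lt : Finset.univ.sup' hne' g < (A i i) ^ 2 := by
        rw [Finset.sup'_lt_iff]
        intro k _
        by_cases hk : k ∈ O
        · simp only [hg_def, if_pos hk]
          have hki : k ≠ i := fun h => hiO (h ▸ hk)
          exact pow_lt_pow_left₀ (hdiag i k hki) (hnn k i) two_ne_zero
        · simp only [hg_def, if_neg hk]
          positivity
      exact max_lt hyx (lt_of_le_of_lt hs_le hB_lt)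

/-- Under Assumptions A, with an ordered set O satisfying
An(O) ∩ Oᶜ = ∅ and a > 1: if two distinct nodes j₁, j₂ ∈ Oᶜ both satisfy the
equality criterion σ²_{M_{i,aj,aO}} − σ²_{M_{i,j,O}} = (a²−1)σ²_{M_{j,O}} for
all i ∉ O ∪ {j}, then j₁ ∉ an(j₂) and j₂ ∉ an(j₁). -/
theorem no_mutual_ancestry_of_criterion {d : ℕ} (A : Fin d → Fin d → ℝ)
    (an : Fin d → Finset (Fin d))
    (hnn : ∀ i j, 0 ≤ A i j)
    (hrow : ∀ i, ∑ j, (A i j) ^ 2 = 1)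
    (hdiag : ∀ ℓ k, k ≠ ℓ → A k ℓ < A ℓ ℓ)
    (hsupp : ∀ j ℓ, A j ℓ ≠ 0 → ℓ = j ∨ ℓ ∈ an j)
    (hpos : ∀ j ℓ, ℓ ∈ an j → 0 < A j ℓ)
    (hirr : ∀ j, j ∉ an j)
    (htrans : ∀ j ℓ m, ℓ ∈ an j → m ∈ an ℓ → m ∈ an j)
    (O : Finset (Fin d)) (hclosed : ∀ i ∈ O, an i ⊆ O)
    (a : ℝ) (ha : 1 < a)
    (j₁ j₂ : Fin d) (hj₁ : j₁ ∉ O) (hj₂ : j₂ ∉ O) (hne : j₁ ≠ j₂)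
    (hcrit₁ : ∀ i, i ∉ insert j₁ O →
        (∑ ℓ, ((A i ℓ) ^ 2 ⊔ (a ^ 2 * (A j₁ ℓ) ^ 2) ⊔ (⨆ k ∈ O, a ^ 2 * (A k ℓ) ^ 2)))
          - (∑ ℓ, ((A i ℓ) ^ 2 ⊔ ((A j₁ ℓ) ^ 2) ⊔ (⨆ k ∈ O, (A k ℓ) ^ 2)))
        = (a ^ 2 - 1) * (∑ ℓ, ((A j₁ ℓ) ^ 2 ⊔ (⨆ k ∈ O, (A k ℓ) ^ 2))))
    (hcrit₂ : ∀ i, i ∉ insert j₂ O →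
        (∑ ℓ, ((A i ℓ) ^ 2 ⊔ (a ^ 2 * (A j₂ ℓ) ^ 2) ⊔ (⨆ k ∈ O, a ^ 2 * (A k ℓ) ^ 2)))
          - (∑ ℓ, ((A i ℓ) ^ 2 ⊔ ((A j₂ ℓ) ^ 2) ⊔ (⨆ k ∈ O, (A k ℓ) ^ 2)))
        = (a ^ 2 - 1) * (∑ ℓ, ((A j₂ ℓ) ^ 2 ⊔ (⨆ k ∈ O, (A k ℓ) ^ 2)))) :
    j₁ ∉ an j₂ ∧ j₂ ∉ an j₁ := by
  constructor
  · intro h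
    have hmem : j₁ ∉ insert j₂ O := by
      simp only [Finset.mem_insert, not_or]
      exact ⟨hne, hj₁⟩
    have hlt := crit_contra A hnn hdiag O a ha j₁ j₂ hj₁ (hpos j₂ j₁ h)
      (hdiag j₁ j₂ hne.symm)
    exact absurd (hcrit₂ j₁ hmem) (ne_of_lt hlt)
  · intro h
    have hmem : j₂ ∉ insert j₁ O := by
      simp only [Finset.mem_insert, not_or]
      exact ⟨hne.symm, hj₂⟩
    have hlt := crit_contra A hnn hdiag O a ha j₂ j₁ hj₂ (hpos j₁ j₂ h)
      (hdiag j₂ j₁ hne)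
    exact absurd (hcrit₁ j₂ hmem) (ne_of_lt hlt)
end

section
/- Let X be a recursive max-linear model on a well-ordered DAG (so A is upper triangular) satisfying Assumptions A. Then the entries of A are recovered from scalings of max-projections by: a_{dd}² = σ_d² = 1; a_{ii}² = σ²_{M_{i,...,d}} − σ²_{M_{i+1,...,d}} for i=1,...,d−1; a_{ij}² = σ²_{M_{i,j+1,...,d}} − σ²_{M_{j+1,...,d}} − Σ_{k=i}^{j−1} a_{ik}² for 1≤i<j≤d−1; and a_{id}² = 1 − Σ_{k=i}^{d−1} a_{ik}² for i=1,...,d−1. -/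
open scoped BigOperators

lemma bsup_eq' {m : ℕ} (f : Fin m → ℝ) (hf : ∀ k, 0 ≤ f k)
    (s : Finset (Fin m)) (k0 : Fin m) (hk0 : k0 ∈ s)
    (hmax : ∀ k ∈ s, f k ≤ f k0) : ⨆ k ∈ s, f k = f k0 := by
  haveI : Nonempty (Fin m) := ⟨k0⟩
  apply le_antisymm
  · apply ciSup_le
    intro k
    by_cases h : k ∈ s
    · rw [ciSup_pos h]; exact hmax k h
    · simp [h, Real.iSup_of_isEmpty, hf k0]
  · refine le_trans ?_ (le_ciSup (Set.Finite.bddAbove (Set.finite_range _)) k0)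
    rw [ciSup_pos hk0]

/-- For a recursive max-linear model on a well-ordered DAG (so
the standardized coefficient matrix A is upper triangular) satisfying
Assumptions A, the entries of A are recovered from the squared scalings
σ²_{M_I} = Σ_ℓ max_{k∈I} a_{kℓ}² of max-projections by:
a_{dd}² = σ_d² = 1; a_{ii}² = σ²_{M_{i,…,d}} − σ²_{M_{i+1,…,d}};
a_{ij}² = σ²_{M_{i,j+1,…,d}} − σ²_{M_{j+1,…,d}} − Σ_{k=i}^{j−1} a_{ik}² for
i < j ≤ d−1; and a_{id}² = 1 − Σ_{k=i}^{d−1} a_{ik}². -/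
theorem coefficients_from_scalings {n : ℕ} (A : Fin (n + 1) → Fin (n + 1) → ℝ)
    (hnn : ∀ i j, 0 ≤ A i j)
    (hrow : ∀ i, ∑ j, (A i j) ^ 2 = 1)
    (hdiag : ∀ ℓ k, k ≠ ℓ → A k ℓ < A ℓ ℓ)
    (hut : ∀ i j : Fin (n + 1), j < i → A i j = 0) :
    (A (Fin.last n) (Fin.last n)) ^ 2 = 1
    ∧ (∀ i : Fin (n + 1), i < Fin.last n →
        (A i i) ^ 2 = (∑ ℓ, ⨆ k ∈ Finset.Ici i, (A k ℓ) ^ 2)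
          - (∑ ℓ, ⨆ k ∈ Finset.Ioi i, (A k ℓ) ^ 2))
    ∧ (∀ i j : Fin (n + 1), i < j → j < Fin.last n →
        (A i j) ^ 2 = (∑ ℓ, ⨆ k ∈ insert i (Finset.Ioi j), (A k ℓ) ^ 2)
          - (∑ ℓ, ⨆ k ∈ Finset.Ioi j, (A k ℓ) ^ 2)
          - ∑ k ∈ Finset.Ico i j, (A i k) ^ 2)
    ∧ (∀ i : Fin (n + 1), i < Fin.last n →
        (A i (Fin.last n)) ^ 2 = 1 - ∑ k ∈ Finset.Ico i (Fin.last n), (A i k) ^ 2) := by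
  have hsq : ∀ k ℓ : Fin (n+1), (0:ℝ) ≤ (A k ℓ)^2 := fun k ℓ => sq_nonneg _
  have hcol : ∀ ℓ k : Fin (n+1), (A k ℓ)^2 ≤ (A ℓ ℓ)^2 := by
    intro ℓ k
    by_cases h : k = ℓ
    · subst h; exact le_rfl
    · exact pow_le_pow_left₀ (hnn k ℓ) (hdiag ℓ k h).le 2
  -- part 1
  have part1 : (A (Fin.last n) (Fin.last n)) ^ 2 = 1 := by
    rw [← hrow (Fin.last n)]
    symm
    apply Finset.sum_eq_single_of_mem _ (Finset.mem_univ _)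
    intro b _ hb
    rw [hut (Fin.last n) b (lt_of_le_of_ne (Fin.le_last b) hb)]
    ring
  -- part 2
  have part2 : ∀ i : Fin (n + 1), i < Fin.last n →
      (A i i) ^ 2 = (∑ ℓ, ⨆ k ∈ Finset.Ici i, (A k ℓ) ^ 2)
        - (∑ ℓ, ⨆ k ∈ Finset.Ioi i, (A k ℓ) ^ 2) := by
    intro i hi
    have hIci : ∀ ℓ, (⨆ k ∈ Finset.Ici i, (A k ℓ)^2)
        = if i ≤ ℓ then (A ℓ ℓ)^2 else 0 := by
      intro ℓ
      split_ifs with h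
      · exact bsup_eq' _ (fun k => hsq k ℓ) _ ℓ (Finset.mem_Ici.mpr h) (fun k _ => hcol ℓ k)
      · have hz : ∀ k, i ≤ k → A k ℓ = 0 :=
          fun k hk => hut k ℓ (lt_of_lt_of_le (not_le.mp h) hk)
        rw [bsup_eq' _ (fun k => hsq k ℓ) _ i (Finset.mem_Ici.mpr le_rfl)
          (fun k hk => by rw [hz k (Finset.mem_Ici.mp hk), hz i le_rfl])]
        rw [hz i le_rfl]; ring
    have hIoi : ∀ ℓ, (⨆ k ∈ Finset.Ioi i, (A k ℓ)^2)
        = if i < ℓ then (A ℓ ℓ)^2 else 0 := by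
      intro ℓ
      split_ifs with h
      · exact bsup_eq' _ (fun k => hsq k ℓ) _ ℓ (Finset.mem_Ioi.mpr h) (fun k _ => hcol ℓ k)
      · have hz : ∀ k, i < k → A k ℓ = 0 :=
          fun k hk => hut k ℓ (lt_of_le_of_lt (not_lt.mp h) hk)
        rw [bsup_eq' _ (fun k => hsq k ℓ) _ (Fin.last n) (Finset.mem_Ioi.mpr hi)
          (fun k hk => by rw [hz k (Finset.mem_Ioi.mp hk), hz _ hi])]
        rw [hz _ hi]; ring
    have hterm : ∀ ℓ, ((⨆ k ∈ Finset.Ici i, (A k ℓ)^2) - ⨆ k ∈ Finset.Ioi i, (A k ℓ)^2)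
        = if ℓ = i then (A i i)^2 else 0 := by
      intro ℓ
      rw [hIci ℓ, hIoi ℓ]
      rcases lt_trichotomy ℓ i with h | h | h
      · simp [not_le.mpr h, not_lt.mpr h.le, h.ne]
      · subst h; simp
      · simp [h.le, h, h.ne']
    rw [← Finset.sum_sub_distrib, Finset.sum_congr rfl (fun ℓ _ => hterm ℓ)]
    simp
  -- part 3
  have part3 : ∀ i j : Fin (n + 1), i < j → j < Fin.last n →
      (A i j) ^ 2 = (∑ ℓ, ⨆ k ∈ insert i (Finset.Ioi j), (A k ℓ) ^ 2)
        - (∑ ℓ, ⨆ k ∈ Finset.Ioi j, (A k ℓ) ^ 2)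
        - ∑ k ∈ Finset.Ico i j, (A i k) ^ 2 := by
    intro i j hij hj
    have h1 : ∀ ℓ, (⨆ k ∈ insert i (Finset.Ioi j), (A k ℓ)^2)
        = if j < ℓ then (A ℓ ℓ)^2 else (A i ℓ)^2 := by
      intro ℓ
      split_ifs with h
      · exact bsup_eq' _ (fun k => hsq k ℓ) _ ℓ
          (Finset.mem_insert_of_mem (Finset.mem_Ioi.mpr h)) (fun k _ => hcol ℓ k)
      · refine bsup_eq' _ (fun k => hsq k ℓ) _ i (Finset.mem_insert_self _ _) ?_
        intro k hk
        rcases Finset.mem_insert.mp hk with hk | hk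
        · subst hk; exact le_rfl
        · rw [hut k ℓ (lt_of_le_of_lt (not_lt.mp h) (Finset.mem_Ioi.mp hk))]
          simpa using hsq i ℓ
    have h2 : ∀ ℓ, (⨆ k ∈ Finset.Ioi j, (A k ℓ)^2)
        = if j < ℓ then (A ℓ ℓ)^2 else 0 := by
      intro ℓ
      split_ifs with h
      · exact bsup_eq' _ (fun k => hsq k ℓ) _ ℓ (Finset.mem_Ioi.mpr h) (fun k _ => hcol ℓ k)
      · have hz : ∀ k, j < k → A k ℓ = 0 :=
          fun k hk => hut k ℓ (lt_of_le_of_lt (not_lt.mp h) hk)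
        rw [bsup_eq' _ (fun k => hsq k ℓ) _ (Fin.last n) (Finset.mem_Ioi.mpr hj)
          (fun k hk => by rw [hz k (Finset.mem_Ioi.mp hk), hz _ hj])]
        rw [hz _ hj]; ring
    have hterm : ∀ ℓ, ((⨆ k ∈ insert i (Finset.Ioi j), (A k ℓ)^2)
        - ⨆ k ∈ Finset.Ioi j, (A k ℓ)^2) = if ℓ ∈ Finset.Iic j then (A i ℓ)^2 else 0 := by
      intro ℓ
      rw [h1 ℓ, h2 ℓ]
      by_cases h : j < ℓ
      · simp [h, Finset.mem_Iic, not_le.mpr h]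
      · simp [h, Finset.mem_Iic, not_lt.mp h]
    have hS : (∑ ℓ, ⨆ k ∈ insert i (Finset.Ioi j), (A k ℓ)^2)
        - (∑ ℓ, ⨆ k ∈ Finset.Ioi j, (A k ℓ)^2)
        = ∑ ℓ ∈ Finset.Icc i j, (A i ℓ)^2 := by
      rw [← Finset.sum_sub_distrib, Finset.sum_congr rfl (fun ℓ _ => hterm ℓ),
        Finset.sum_ite_mem, Finset.univ_inter]
      symm
      apply Finset.sum_subset
      · intro x hx
        exact Finset.mem_Iic.mpr (Finset.mem_Icc.mp hx).2
      · intro x hx hx'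
        have : x < i := by
          by_contra hc
          exact hx' (Finset.mem_Icc.mpr ⟨not_lt.mp hc, Finset.mem_Iic.mp hx⟩)
        rw [hut i x this]; ring
    rw [hS, ← Finset.Ico_insert_right hij.le, Finset.sum_insert Finset.right_notMem_Ico]
    ring
  -- part 4
  have part4 : ∀ i : Fin (n + 1), i < Fin.last n →
      (A i (Fin.last n)) ^ 2 = 1 - ∑ k ∈ Finset.Ico i (Fin.last n), (A i k) ^ 2 := by
    intro i hi
    have h1 : ∑ j, (A i j)^2 = ∑ j ∈ Finset.Icc i (Fin.last n), (A i j)^2 := by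
      symm
      apply Finset.sum_subset (Finset.subset_univ _)
      intro x _ hx
      have : x < i := by
        by_contra hc
        exact hx (Finset.mem_Icc.mpr ⟨not_lt.mp hc, Fin.le_last x⟩)
      rw [hut i x this]; ring
    have h2 := hrow i
    rw [h1, ← Finset.Ico_insert_right (Fin.le_last i),
      Finset.sum_insert Finset.right_notMem_Ico] at h2
    linarith
  exact ⟨part1, part2, part3, part4⟩
end
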